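/- arXiv:2210.09913 — 11 statements merged into one kernel-verified Lean document; each statement's English description precedes it below -/
import Mathlib

section
/- Let (Ω,𝓕,P) be a probability space, Xᵢ : Ω → Ωᵢ (i = 1,…,5) measurable maps into measurable spaces, and fix measurable sets A₃ ⊆ Ω₃, A₄ ⊆ Ω₄, A₅ ⊆ Ω₅. Set ν := (P.restrict (X₅⁻¹(A₅))).map X₁ and ν' := (P.restrict (X₃⁻¹(A₃) ∩ X₅⁻¹(A₅))).map X₁, and let g : Ω₁ → ℝ be a nonnegative 𝓕₁-measurable function with ∫_{A₁} g dν = P(X₁⁻¹(A₁) ∩ X₃⁻¹(A₃) ∩ X₅⁻¹(A₅)) for all measurable A₁ (a version of P[X₃∈A₃|X₁,X₅∈A₅]). (i) If K is a finite kernel from Ω₁ to Ω₂ satisfying ∫_{A₁} K(ω₁)(A₂) dν' = P(X₁⁻¹(A₁) ∩ X₂⁻¹(A₂) ∩ X₃⁻¹(A₃) ∩ X₄⁻¹(A₄) ∩ X₅⁻¹(A₅)) for all measurable A₁, A₂, then ∫_{A₁} g(ω₁)·K(ω₁)(A₂) dν = P(X₁⁻¹(A₁) ∩ X₂⁻¹(A₂)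 ∩ X₃⁻¹(A₃) ∩ X₄⁻¹(A₄) ∩ X₅⁻¹(A₅)) for all measurable A₁, A₂. (ii) Conversely, if K' is a finite kernel from Ω₁ to Ω₂ satisfying ∫_{A₁} K'(ω₁)(A₂) dν = P(X₁⁻¹(A₁) ∩ X₂⁻¹(A₂) ∩ X₃⁻¹(A₃) ∩ X₄⁻¹(A₄) ∩ X₅⁻¹(A₅)) for all A₁, A₂, then the map sending ω₁ with g(ω₁) ≠ 0 to (1/g(ω₁))·K'(ω₁) and ω₁ with g(ω₁) = 0 to the zero measure satisfies ∫_{A₁} of its value at A₂ with respect to ν' equals P(X₁⁻¹(A₁) ∩ X₂⁻¹(A₂) ∩ X₃⁻¹(A₃) ∩ X₄⁻¹(A₄) ∩ X₅⁻¹(A₅)) for all A₁, A₂. (Paper's Theorem 3.2.) -/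
open MeasureTheory ProbabilityTheory

/-- Paper's Theorem 3.2: transformation between the conditional kernel
`P[X₂, X₄ ∈ A₄ | X₁; X₃ ∈ A₃, X₅ ∈ A₅]` and the conditional kernel
`P[X₂; X₃ ∈ A₃, X₄ ∈ A₄ | X₁, X₅ ∈ A₅]` via the conditional probability
`g = P[X₃ ∈ A₃ | X₁, X₅ ∈ A₅]`: multiplying by `g` in one direction and
dividing by `g` (with value `0` where `g = 0`) in the other. -/
theorem transformation_of_conditional_probability_of_cooccurrence
    {Ω Ω₁ Ω₂ Ω₃ Ω₄ Ω₅ : Type*} [MeasurableSpace Ω] [MeasurableSpace Ω₁] [MeasurableSpace Ω₂]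
    [MeasurableSpace Ω₃] [MeasurableSpace Ω₄] [MeasurableSpace Ω₅]
    (P : Measure Ω) [IsProbabilityMeasure P]
    {X₁ : Ω → Ω₁} {X₂ : Ω → Ω₂} {X₃ : Ω → Ω₃} {X₄ : Ω → Ω₄} {X₅ : Ω → Ω₅}
    (hX₁ : Measurable X₁) (hX₂ : Measurable X₂) (hX₃ : Measurable X₃)
    (hX₄ : Measurable X₄) (hX₅ : Measurable X₅)
    {A₃ : Set Ω₃} {A₄ : Set Ω₄} {A₅ : Set Ω₅}
    (hA₃ : MeasurableSet A₃) (hA₄ : MeasurableSet A₄) (hA₅ : MeasurableSet A₅)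
    (g : Ω₁ → ℝ) (hg : Measurable g) (hg0 : ∀ x, 0 ≤ g x)
    (hgver : ∀ A₁ : Set Ω₁, MeasurableSet A₁ →
      ∫ x in A₁, g x ∂((P.restrict (X₅ ⁻¹' A₅)).map X₁) =
        (P (X₁ ⁻¹' A₁ ∩ X₃ ⁻¹' A₃ ∩ X₅ ⁻¹' A₅)).toReal) :
    (∀ K : Kernel Ω₁ Ω₂, IsFiniteKernel K →
      (∀ (A₁ : Set Ω₁) (A₂ : Set Ω₂), MeasurableSet A₁ → MeasurableSet A₂ →
        ∫⁻ ω₁ in A₁, K ω₁ A₂ ∂((P.restrict (X₃ ⁻¹' A₃ ∩ X₅ ⁻¹' A₅)).map X₁) =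
          P (X₁ ⁻¹' A₁ ∩ X₂ ⁻¹' A₂ ∩ X₃ ⁻¹' A₃ ∩ X₄ ⁻¹' A₄ ∩ X₅ ⁻¹' A₅)) →
      ∀ (A₁ : Set Ω₁) (A₂ : Set Ω₂), MeasurableSet A₁ → MeasurableSet A₂ →
        ∫⁻ ω₁ in A₁, ENNReal.ofReal (g ω₁) * K ω₁ A₂
            ∂((P.restrict (X₅ ⁻¹' A₅)).map X₁) =
          P (X₁ ⁻¹' A₁ ∩ X₂ ⁻¹' A₂ ∩ X₃ ⁻¹' A₃ ∩ X₄ ⁻¹' A₄ ∩ X₅ ⁻¹' A₅)) ∧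
    (∀ K' : Kernel Ω₁ Ω₂, IsFiniteKernel K' →
      (∀ (A₁ : Set Ω₁) (A₂ : Set Ω₂), MeasurableSet A₁ → MeasurableSet A₂ →
        ∫⁻ ω₁ in A₁, K' ω₁ A₂ ∂((P.restrict (X₅ ⁻¹' A₅)).map X₁) =
          P (X₁ ⁻¹' A₁ ∩ X₂ ⁻¹' A₂ ∩ X₃ ⁻¹' A₃ ∩ X₄ ⁻¹' A₄ ∩ X₅ ⁻¹' A₅)) →
      ∀ (A₁ : Set Ω₁) (A₂ : Set Ω₂), MeasurableSet A₁ → MeasurableSet A₂ →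
        ∫⁻ ω₁ in A₁, (if g ω₁ = 0 then 0 else K' ω₁ A₂ / ENNReal.ofReal (g ω₁))
            ∂((P.restrict (X₃ ⁻¹' A₃ ∩ X₅ ⁻¹' A₅)).map X₁) =
          P (X₁ ⁻¹' A₁ ∩ X₂ ⁻¹' A₂ ∩ X₃ ⁻¹' A₃ ∩ X₄ ⁻¹' A₄ ∩ X₅ ⁻¹' A₅)) := by
  set ν : Measure Ω₁ := (P.restrict (X₅ ⁻¹' A₅)).map X₁ with hν
  set ν' : Measure Ω₁ := (P.restrict (X₃ ⁻¹' A₃ ∩ X₅ ⁻¹' A₅)).map X₁ with hν'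
  have hS₅ : MeasurableSet (X₅ ⁻¹' A₅) := hX₅ hA₅
  have hν'app : ∀ A₁ : Set Ω₁, MeasurableSet A₁ →
      ν' A₁ = P (X₁ ⁻¹' A₁ ∩ X₃ ⁻¹' A₃ ∩ X₅ ⁻¹' A₅) := by
    intro A₁ hA₁
    rw [hν', Measure.map_apply hX₁ hA₁, Measure.restrict_apply (hX₁ hA₁), Set.inter_assoc]
  -- integrability of `g` wrt `ν`
  have hgnn : 0 ≤ᵐ[ν] g := Filter.Eventually.of_forall hg0
  have hSn : ∀ n : ℕ, MeasurableSet {x | g x ≤ (n : ℝ)} := fun n =>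
    measurableSet_le hg measurable_const
  have hintn : ∀ n : ℕ, IntegrableOn g {x | g x ≤ (n : ℝ)} ν := by
    intro n
    refine Measure.integrableOn_of_bounded (measure_ne_top ν _) hg.aestronglyMeasurable
      (M := (n : ℝ)) ?_
    filter_upwards [ae_restrict_mem (hSn n)] with x hx
    rw [Real.norm_eq_abs, abs_of_nonneg (hg0 x)]
    exact hx
  have hsetn : ∀ n : ℕ, ∫⁻ x in {x | g x ≤ (n : ℝ)}, ENNReal.ofReal (g x) ∂ν ≤ 1 := by
    intro n
    rw [← ofReal_integral_eq_lintegral_ofReal (hintn n) (ae_restrict_of_ae hgnn),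
      hgver _ (hSn n), ENNReal.ofReal_toReal (measure_ne_top P _)]
    exact prob_le_one
  have hlim : ∫⁻ x, ENNReal.ofReal (g x) ∂ν ≤ 1 := by
    have heq : (fun x => ENNReal.ofReal (g x)) = fun x =>
        ⨆ n : ℕ, ({x | g x ≤ (n : ℝ)}).indicator (fun y => ENNReal.ofReal (g y)) x := by
      funext x
      obtain ⟨n, hn⟩ := exists_nat_ge (g x)
      refine le_antisymm (le_trans (le_of_eq ?_) (le_iSup _ n)) (iSup_le fun m => ?_)
      · rw [Set.indicator_of_mem (show x ∈ {x | g x ≤ (n:ℝ)} from hn)]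
      · by_cases hx : x ∈ {x | g x ≤ (m : ℝ)}
        · rw [Set.indicator_of_mem hx]
        · rw [Set.indicator_of_notMem hx]; exact zero_le
    rw [heq, lintegral_iSup]
    · exact iSup_le fun n => by
        rw [lintegral_indicator (hSn n)]; exact hsetn n
    · exact fun n => (hg.ennreal_ofReal).indicator (hSn n)
    · intro m n hmn x
      exact Set.indicator_le_indicator_of_subset
        (fun y hy => le_trans hy.out (Nat.cast_le.mpr hmn)) (fun a => zero_le) x
  have hgint : Integrable g ν :=
    ⟨hg.aestronglyMeasurable, (hasFiniteIntegral_iff_ofReal hgnn).mpr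
      (lt_of_le_of_lt hlim ENNReal.one_lt_top)⟩
  -- the density identity
  have hdens : ν' = ν.withDensity (fun x => ENNReal.ofReal (g x)) := by
    ext A₁ hA₁
    rw [withDensity_apply _ hA₁, hν'app A₁ hA₁,
      ← ofReal_integral_eq_lintegral_ofReal (hgint.integrableOn) (ae_restrict_of_ae hgnn),
      hgver A₁ hA₁, ENNReal.ofReal_toReal (measure_ne_top P _)]
  constructor
  · -- part (i)
    intro K _ hK A₁ A₂ hA₁ hA₂
    have h := hK A₁ A₂ hA₁ hA₂
    rw [hdens, setLIntegral_withDensity_eq_setLIntegral_mul ν hg.ennreal_ofReal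
      (K.measurable_coe hA₂) hA₁] at h
    exact h
  · -- part (ii)
    intro K' _ hK' A₁ A₂ hA₁ hA₂
    have hS0 : MeasurableSet {x | g x = 0} := hg (measurableSet_singleton 0)
    have hfmeas : Measurable fun ω₁ => (if g ω₁ = 0 then 0 else
        K' ω₁ A₂ / ENNReal.ofReal (g ω₁)) :=
      Measurable.ite hS0 measurable_const ((K'.measurable_coe hA₂).div hg.ennreal_ofReal)
    rw [hdens, setLIntegral_withDensity_eq_setLIntegral_mul ν hg.ennreal_ofReal hfmeas hA₁]
    have hpt : ∀ ω, (fun x => ENNReal.ofReal (g x)) ω *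
        (if g ω = 0 then 0 else K' ω A₂ / ENNReal.ofReal (g ω)) =
        ({x | g x ≠ 0}).indicator (fun ω => K' ω A₂) ω := by
      intro ω
      by_cases h : g ω = 0
      · simp [h]
      · have hpos : 0 < g ω := lt_of_le_of_ne (hg0 ω) (Ne.symm h)
        rw [if_neg h, Set.indicator_of_mem (show ω ∈ {x | g x ≠ 0} from h), ENNReal.mul_div_cancel
          (ENNReal.ofReal_pos.mpr hpos).ne' ENNReal.ofReal_ne_top]
    simp only [Pi.mul_apply]
    have hS0c : MeasurableSet {x | g x ≠ 0} := hS0.compl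
    rw [lintegral_congr hpt, lintegral_indicator hS0c, Measure.restrict_restrict hS0c]
    have hgz : P (X₁ ⁻¹' {x | g x = 0} ∩ X₃ ⁻¹' A₃ ∩ X₅ ⁻¹' A₅) = 0 := by
      have h1 : ν' {x | g x = 0} = 0 := by
        rw [hdens, withDensity_apply _ hS0]
        have h0 : ∫⁻ x in {x | g x = 0}, ENNReal.ofReal (g x) ∂ν =
            ∫⁻ x in {x | g x = 0}, 0 ∂ν :=
          setLIntegral_congr_fun hS0
            (fun x hx => by simp [hx.out])
        rw [h0, lintegral_zero]
      rw [← hν'app _ hS0]; exact h1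
    have hsub : P (X₁ ⁻¹' ({x | g x = 0} ∩ A₁) ∩ X₂ ⁻¹' A₂ ∩ X₃ ⁻¹' A₃ ∩ X₄ ⁻¹' A₄ ∩
        X₅ ⁻¹' A₅) = 0 := by
      refine measure_mono_null ?_ hgz
      intro x hx
      exact ⟨⟨hx.1.1.1.1.1, hx.1.1.2⟩, hx.2⟩
    have h := hK' ({x | g x ≠ 0} ∩ A₁) A₂ (hS0c.inter hA₁) hA₂
    rw [h]
    have hdecomp : X₁ ⁻¹' A₁ ∩ X₂ ⁻¹' A₂ ∩ X₃ ⁻¹' A₃ ∩ X₄ ⁻¹' A₄ ∩ X₅ ⁻¹' A₅ =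
        (X₁ ⁻¹' ({x | g x ≠ 0} ∩ A₁) ∩ X₂ ⁻¹' A₂ ∩ X₃ ⁻¹' A₃ ∩ X₄ ⁻¹' A₄ ∩ X₅ ⁻¹' A₅) ∪
        (X₁ ⁻¹' ({x | g x = 0} ∩ A₁) ∩ X₂ ⁻¹' A₂ ∩ X₃ ⁻¹' A₃ ∩ X₄ ⁻¹' A₄ ∩ X₅ ⁻¹' A₅) := by
      ext x
      by_cases hgx : g (X₁ x) = 0 <;>
        simp [Set.mem_inter_iff, Set.mem_preimage, hgx] <;> tauto
    rw [hdecomp]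
    refine le_antisymm (measure_mono Set.subset_union_left)
      (le_trans (measure_union_le _ _) ?_)
    rw [hsub, add_zero]
end

section
/- Let (Ω,𝓕,P) be a probability space, Xᵢ : Ω → Ωᵢ (i = 1,…,6) measurable maps into measurable spaces, and fix measurable sets A₅ ⊆ Ω₅, A₆ ⊆ Ω₆. Set ν := (P.restrict (X₆⁻¹(A₆))).map X₁. Suppose K is a finite kernel from Ω₁ to Ω₂ × Ω₃ × Ω₄ satisfying ∫_{A₁} K(ω₁)(S₂ × S₃ × S₄) dν = P(X₁⁻¹(A₁) ∩ X₂⁻¹(S₂) ∩ X₃⁻¹(S₃) ∩ X₄⁻¹(S₄) ∩ X₅⁻¹(A₅) ∩ X₆⁻¹(A₆)) for all measurable A₁, S₂, S₃, S₄. Fix measurable sets A₃ ⊆ Ω₃ and A₄ ⊆ Ω₄, and let h : Ω₁ → ℝ be a nonnegative 𝓕₁-measurable function with ∫_{A₁} h dν = P(X₁⁻¹(A₁) ∩ X₄⁻¹(A₄) ∩ X₆⁻¹(A₆)) for all measurable A₁ (a version of P[X₄∈A₄|X₁,X₆∈A₆]). Then the function L(ω₁, A₂) := K(ω₁)(A₂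 × A₃ × A₄)/h(ω₁) when h(ω₁) ≠ 0, and 0 otherwise, satisfies ∫_{A₁} L(ω₁, A₂) d(((P.restrict (X₄⁻¹(A₄) ∩ X₆⁻¹(A₆))).map X₁)(ω₁)) = P(X₁⁻¹(A₁) ∩ X₂⁻¹(A₂) ∩ X₃⁻¹(A₃) ∩ X₄⁻¹(A₄) ∩ X₅⁻¹(A₅) ∩ X₆⁻¹(A₆)) for all measurable A₁ ⊆ Ω₁ and A₂ ⊆ Ω₂. (Paper's Theorem 3.4.) -/
open MeasureTheory ProbabilityTheory

open scoped ENNReal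

/-! Against `ν = P[X₁, X₆ ∈ A₆]`, the version `h` is a density of `μ = P[X₁, X₄ ∈ A₄ ∩ X₆ ∈ A₆]`.
Integrating `K(·)(A₂ × A₃ × A₄) / h` against `μ = h ν` therefore integrates `K(·)(A₂ × A₃ × A₄)`
against `ν` over `{h > 0}`, and the hypothesis on `K` evaluates this; removing `{h = 0}` costs
nothing because it is `μ`-null. If `h` is not `ν`-integrable, its Bochner integral is the junk
value `0`, which forces `μ = 0`, and both sides vanish. -/

section Density

variable {α : Type*} [MeasurableSpace α] {ν μ : Measure α}

theorem withDensity_ofReal_eq_of_setIntegral_eq [IsFiniteMeasure μ] {h : α → ℝ}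
    (hint : Integrable h ν) (hh0 : 0 ≤ᵐ[ν] h)
    (heq : ∀ s, MeasurableSet s → ∫ x in s, h x ∂ν = μ.real s) :
    ν.withDensity (fun x => ENNReal.ofReal (h x)) = μ := by
  ext s hs
  rw [withDensity_apply _ hs, ← ofReal_integral_eq_lintegral_ofReal hint.restrict
    (ae_restrict_of_ae hh0), heq s hs, ofReal_measureReal]

theorem eq_zero_of_setIntegral_eq_of_not_integrable [IsFiniteMeasure μ] {h : α → ℝ}
    (hint : ¬Integrable h ν) (heq : ∀ s, MeasurableSet s → ∫ x in s, h x ∂ν = μ.real s) :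
    μ = 0 := by
  have huniv := heq Set.univ MeasurableSet.univ
  rw [Measure.restrict_univ, integral_undef hint, eq_comm, measureReal_eq_zero_iff] at huniv
  exact Measure.measure_univ_eq_zero.mp huniv

theorem ofReal_mul_ite_div (a : ℝ) (b : ℝ≥0∞) :
    ENNReal.ofReal a * (if a = 0 then 0 else b / ENNReal.ofReal a) =
      if 0 < a then b else 0 := by
  rcases lt_trichotomy a 0 with ha | rfl | ha
  · simp [ENNReal.ofReal_of_nonpos ha.le, ha.not_gt]
  · simp
  · rw [if_neg ha.ne', if_pos ha,
      ENNReal.mul_div_cancel (ENNReal.ofReal_pos.2 ha).ne' ENNReal.ofReal_ne_top]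

theorem setLIntegral_withDensity_ofReal_ite_div {h : α → ℝ} (hh : Measurable h)
    {g : α → ℝ≥0∞} (hg : Measurable g) {s : Set α} (hs : MeasurableSet s) :
    ∫⁻ x in s, (if h x = 0 then 0 else g x / ENNReal.ofReal (h x))
        ∂(ν.withDensity fun x => ENNReal.ofReal (h x)) =
      ∫⁻ x in s ∩ {x | 0 < h x}, g x ∂ν := by
  have hpos : MeasurableSet {x | 0 < h x} := measurableSet_lt measurable_const hh
  have hq : Measurable fun x => if h x = 0 then 0 else g x / ENNReal.ofReal (h x) :=
    Measurable.ite (hh (measurableSet_singleton 0)) measurable_const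
      (hg.div hh.ennreal_ofReal)
  rw [setLIntegral_withDensity_eq_setLIntegral_mul ν hh.ennreal_ofReal hq hs, Set.inter_comm,
    ← Measure.restrict_restrict hpos, ← lintegral_indicator hpos]
  simp only [Pi.mul_apply, ofReal_mul_ite_div, Set.indicator_apply, Set.mem_ofPred_eq]

end Density

theorem conditional_cooccurrence_kernel_div_general
    {Ω Ω₁ Ω₂ Ω₃ Ω₄ Ω₅ Ω₆ : Type*} [MeasurableSpace Ω] [MeasurableSpace Ω₁]
    [MeasurableSpace Ω₂] [MeasurableSpace Ω₃] [MeasurableSpace Ω₄] [MeasurableSpace Ω₅]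
    [MeasurableSpace Ω₆]
    (P : Measure Ω) [IsProbabilityMeasure P]
    {X₁ : Ω → Ω₁} {X₂ : Ω → Ω₂} {X₃ : Ω → Ω₃} {X₄ : Ω → Ω₄} {X₅ : Ω → Ω₅} {X₆ : Ω → Ω₆}
    (hX₁ : Measurable X₁)
    {A₅ : Set Ω₅} {A₆ : Set Ω₆}
    (K : Kernel Ω₁ (Ω₂ × Ω₃ × Ω₄))
    (hK : ∀ (A₁ : Set Ω₁) (S₂ : Set Ω₂) (S₃ : Set Ω₃) (S₄ : Set Ω₄),
      MeasurableSet A₁ → MeasurableSet S₂ → MeasurableSet S₃ → MeasurableSet S₄ →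
      ∫⁻ ω₁ in A₁, K ω₁ (S₂ ×ˢ (S₃ ×ˢ S₄)) ∂((P.restrict (X₆ ⁻¹' A₆)).map X₁) =
        P (X₁ ⁻¹' A₁ ∩ X₂ ⁻¹' S₂ ∩ X₃ ⁻¹' S₃ ∩ X₄ ⁻¹' S₄ ∩ X₅ ⁻¹' A₅ ∩ X₆ ⁻¹' A₆))
    {A₃ : Set Ω₃} {A₄ : Set Ω₄} (hA₃ : MeasurableSet A₃) (hA₄ : MeasurableSet A₄)
    (h : Ω₁ → ℝ) (hh : Measurable h) (hh0 : ∀ x, 0 ≤ h x)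
    (hhver : ∀ A₁ : Set Ω₁, MeasurableSet A₁ →
      ∫ x in A₁, h x ∂((P.restrict (X₆ ⁻¹' A₆)).map X₁) =
        (P (X₁ ⁻¹' A₁ ∩ X₄ ⁻¹' A₄ ∩ X₆ ⁻¹' A₆)).toReal) :
    ∀ (A₁ : Set Ω₁) (A₂ : Set Ω₂), MeasurableSet A₁ → MeasurableSet A₂ →
      ∫⁻ ω₁ in A₁,
          (if h ω₁ = 0 then 0 else K ω₁ (A₂ ×ˢ (A₃ ×ˢ A₄)) / ENNReal.ofReal (h ω₁))
          ∂((P.restrict (X₄ ⁻¹' A₄ ∩ X₆ ⁻¹' A₆)).map X₁) =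
        P (X₁ ⁻¹' A₁ ∩ X₂ ⁻¹' A₂ ∩ X₃ ⁻¹' A₃ ∩ X₄ ⁻¹' A₄ ∩ X₅ ⁻¹' A₅ ∩ X₆ ⁻¹' A₆) := by
  intro A₁ A₂ hA₁ hA₂
  set ν := (P.restrict (X₆ ⁻¹' A₆)).map X₁
  set μ := (P.restrict (X₄ ⁻¹' A₄ ∩ X₆ ⁻¹' A₆)).map X₁
  have hμh : ∀ s, MeasurableSet s → ∫ x in s, h x ∂ν = μ.real s := fun s hs => by
    rw [hhver s hs, measureReal_def, Measure.map_apply hX₁ hs,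
      Measure.restrict_apply (hX₁ hs), Set.inter_assoc]
  by_cases hint : Integrable h ν
  · have hμ := withDensity_ofReal_eq_of_setIntegral_eq hint (.of_forall hh0) hμh
    have hpos : ∀ᵐ ω ∂P, ω ∈ X₄ ⁻¹' A₄ ∩ X₆ ⁻¹' A₆ → 0 < h (X₁ ω) := by
      have hμpos : ∀ᵐ x ∂μ, 0 < h x := by
        rw [← hμ, ae_withDensity_iff hh.ennreal_ofReal]
        exact .of_forall fun x hx => ENNReal.ofReal_pos.1 (pos_iff_ne_zero.2 hx)
      rw [ae_map_iff hX₁.aemeasurable (measurableSet_lt measurable_const hh)] at hμpos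
      exact (ae_restrict_iff (measurableSet_lt measurable_const (hh.comp hX₁))).1 hμpos
    rw [← hμ, setLIntegral_withDensity_ofReal_ite_div hh
      (K.measurable_coe (hA₂.prod (hA₃.prod hA₄))) hA₁,
      hK _ _ _ _ (hA₁.inter (measurableSet_lt measurable_const hh)) hA₂ hA₃ hA₄]
    refine measure_congr (Filter.eventuallyEq_set.2 ?_)
    filter_upwards [hpos] with ω hω
    simp only [Set.mem_inter_iff, Set.mem_preimage, Set.mem_ofPred_eq] at hω ⊢
    tauto
  · have hμ := eq_zero_of_setIntegral_eq_of_not_integrable hint hμh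
    have hE : P (X₄ ⁻¹' A₄ ∩ X₆ ⁻¹' A₆) = 0 :=
      Measure.restrict_eq_zero.1 ((Measure.map_eq_zero_iff hX₁.aemeasurable).1 hμ)
    rw [hμ, Measure.restrict_zero, lintegral_zero_measure]
    refine (measure_mono_null ?_ hE).symm
    exact fun ω hω => ⟨hω.1.1.2, hω.2⟩

/-- Paper's Theorem 3.4: from a kernel version `K` of
`P[X₂, X₃, X₄; X₅ ∈ A₅ | X₁, X₆ ∈ A₆]` and a version `h` of `P[X₄ ∈ A₄ | X₁, X₆ ∈ A₆]`,
the function `L(ω₁, A₂) = K(ω₁)(A₂ × A₃ × A₄)/h(ω₁)` (set to `0` where `h = 0`) is a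
version of `P[X₂; X₃ ∈ A₃, X₅ ∈ A₅ | X₁; X₄ ∈ A₄, X₆ ∈ A₆]`. -/
theorem conditional_cooccurrence_kernel_div
    {Ω Ω₁ Ω₂ Ω₃ Ω₄ Ω₅ Ω₆ : Type*} [MeasurableSpace Ω] [MeasurableSpace Ω₁]
    [MeasurableSpace Ω₂] [MeasurableSpace Ω₃] [MeasurableSpace Ω₄] [MeasurableSpace Ω₅]
    [MeasurableSpace Ω₆]
    (P : Measure Ω) [IsProbabilityMeasure P]
    {X₁ : Ω → Ω₁} {X₂ : Ω → Ω₂} {X₃ : Ω → Ω₃} {X₄ : Ω → Ω₄} {X₅ : Ω → Ω₅} {X₆ : Ω → Ω₆}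
    (hX₁ : Measurable X₁) (hX₂ : Measurable X₂) (hX₃ : Measurable X₃)
    (hX₄ : Measurable X₄) (hX₅ : Measurable X₅) (hX₆ : Measurable X₆)
    {A₅ : Set Ω₅} {A₆ : Set Ω₆} (hA₅ : MeasurableSet A₅) (hA₆ : MeasurableSet A₆)
    (K : Kernel Ω₁ (Ω₂ × Ω₃ × Ω₄)) [IsFiniteKernel K]
    (hK : ∀ (A₁ : Set Ω₁) (S₂ : Set Ω₂) (S₃ : Set Ω₃) (S₄ : Set Ω₄),
      MeasurableSet A₁ → MeasurableSet S₂ → MeasurableSet S₃ → MeasurableSet S₄ →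
      ∫⁻ ω₁ in A₁, K ω₁ (S₂ ×ˢ (S₃ ×ˢ S₄)) ∂((P.restrict (X₆ ⁻¹' A₆)).map X₁) =
        P (X₁ ⁻¹' A₁ ∩ X₂ ⁻¹' S₂ ∩ X₃ ⁻¹' S₃ ∩ X₄ ⁻¹' S₄ ∩ X₅ ⁻¹' A₅ ∩ X₆ ⁻¹' A₆))
    {A₃ : Set Ω₃} {A₄ : Set Ω₄} (hA₃ : MeasurableSet A₃) (hA₄ : MeasurableSet A₄)
    (h : Ω₁ → ℝ) (hh : Measurable h) (hh0 : ∀ x, 0 ≤ h x)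
    (hhver : ∀ A₁ : Set Ω₁, MeasurableSet A₁ →
      ∫ x in A₁, h x ∂((P.restrict (X₆ ⁻¹' A₆)).map X₁) =
        (P (X₁ ⁻¹' A₁ ∩ X₄ ⁻¹' A₄ ∩ X₆ ⁻¹' A₆)).toReal) :
    ∀ (A₁ : Set Ω₁) (A₂ : Set Ω₂), MeasurableSet A₁ → MeasurableSet A₂ →
      ∫⁻ ω₁ in A₁,
          (if h ω₁ = 0 then 0 else K ω₁ (A₂ ×ˢ (A₃ ×ˢ A₄)) / ENNReal.ofReal (h ω₁))
          ∂((P.restrict (X₄ ⁻¹' A₄ ∩ X₆ ⁻¹' A₆)).map X₁) =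
        P (X₁ ⁻¹' A₁ ∩ X₂ ⁻¹' A₂ ∩ X₃ ⁻¹' A₃ ∩ X₄ ⁻¹' A₄ ∩ X₅ ⁻¹' A₅ ∩ X₆ ⁻¹' A₆) :=
  conditional_cooccurrence_kernel_div_general P hX₁ K hK hA₃ hA₄ h hh hh0 hhver
end

section
/- Let (Ω,𝓕,P) be a probability space, Xᵢ : Ω → Ωᵢ (i = 1,…,6) measurable maps into measurable spaces, and fix measurable sets A₄ ⊆ Ω₄, A₅ ⊆ Ω₅, A₆ ⊆ Ω₆. Set ν := (P.restrict (X₅⁻¹(A₅))).map X₁ and μ := (P.restrict (X₅⁻¹(A₅) ∩ X₆⁻¹(A₆))).map (ω ↦ (X₁(ω), X₂(ω))). Suppose K₂₃ is a finite kernel from Ω₁ × Ω₂ to Ω₃ with ∫_C K₂₃((ω₁,ω₂))(A₃) dμ = P((ω : (X₁(ω),X₂(ω)) ∈ C) ∩ X₃⁻¹(A₃) ∩ X₄⁻¹(A₄) ∩ X₅⁻¹(A₅) ∩ X₆⁻¹(A₆)) for all measurable C ⊆ Ω₁ × Ω₂ and A₃ ⊆ Ω₃, and K₂ is a finite kernel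 from Ω₁ to Ω₂ with ∫_{A₁} K₂(ω₁)(A₂) dν = P(X₁⁻¹(A₁) ∩ X₂⁻¹(A₂) ∩ X₅⁻¹(A₅) ∩ X₆⁻¹(A₆)) for all measurable A₁, A₂. Then for all measurable A₁ ⊆ Ω₁, A₂ ⊆ Ω₂, A₃ ⊆ Ω₃: ∫_{A₁} (∫_{A₂} K₂₃((ω₁,ω₂))(A₃) dK₂(ω₁)(ω₂)) dν(ω₁) = P(X₁⁻¹(A₁) ∩ X₂⁻¹(A₂) ∩ X₃⁻¹(A₃) ∩ X₄⁻¹(A₄) ∩ X₅⁻¹(A₅) ∩ X₆⁻¹(A₆)); that is, the composed kernel (ω₁, A₂ × A₃) ↦ ∫_{A₂} K₂₃((ω₁,ω₂))(A₃) dK₂(ω₁)(ω₂) is a version of P[X₂, X₃; X₄∈A₄, X₆∈A₆ | X₁, X₅∈A₅]. (Paper's Theorem 3.7, equation (3.7.1).) -/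
open MeasureTheory ProbabilityTheory

/-- Paper's Theorem 3.7, equation (3.7.1): composing a kernel version `K₂₃` of
`P[X₃, X₄ ∈ A₄ | X₁, X₂; X₅ ∈ A₅, X₆ ∈ A₆]` with a kernel version `K₂` of
`P[X₂, X₆ ∈ A₆ | X₁, X₅ ∈ A₅]` yields a version of
`P[X₂, X₃; X₄ ∈ A₄, X₆ ∈ A₆ | X₁, X₅ ∈ A₅]`. -/
theorem composition_of_conditional_cooccurrence_kernels
    {Ω Ω₁ Ω₂ Ω₃ Ω₄ Ω₅ Ω₆ : Type*} [MeasurableSpace Ω] [MeasurableSpace Ω₁]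
    [MeasurableSpace Ω₂] [MeasurableSpace Ω₃] [MeasurableSpace Ω₄] [MeasurableSpace Ω₅]
    [MeasurableSpace Ω₆]
    (P : Measure Ω) [IsProbabilityMeasure P]
    {X₁ : Ω → Ω₁} {X₂ : Ω → Ω₂} {X₃ : Ω → Ω₃} {X₄ : Ω → Ω₄} {X₅ : Ω → Ω₅} {X₆ : Ω → Ω₆}
    (hX₁ : Measurable X₁) (hX₂ : Measurable X₂) (hX₃ : Measurable X₃)
    (hX₄ : Measurable X₄) (hX₅ : Measurable X₅) (hX₆ : Measurable X₆)
    {A₄ : Set Ω₄} {A₅ : Set Ω₅} {A₆ : Set Ω₆}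
    (hA₄ : MeasurableSet A₄) (hA₅ : MeasurableSet A₅) (hA₆ : MeasurableSet A₆)
    (K₂₃ : Kernel (Ω₁ × Ω₂) Ω₃) [IsFiniteKernel K₂₃]
    (hK₂₃ : ∀ (C : Set (Ω₁ × Ω₂)) (A₃ : Set Ω₃), MeasurableSet C → MeasurableSet A₃ →
      ∫⁻ p in C, K₂₃ p A₃
          ∂((P.restrict (X₅ ⁻¹' A₅ ∩ X₆ ⁻¹' A₆)).map (fun ω => (X₁ ω, X₂ ω))) =
        P ((fun ω => (X₁ ω, X₂ ω)) ⁻¹' C ∩ X₃ ⁻¹' A₃ ∩ X₄ ⁻¹' A₄ ∩ X₅ ⁻¹' A₅ ∩ X₆ ⁻¹' A₆))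
    (K₂ : Kernel Ω₁ Ω₂) [IsFiniteKernel K₂]
    (hK₂ : ∀ (A₁ : Set Ω₁) (A₂ : Set Ω₂), MeasurableSet A₁ → MeasurableSet A₂ →
      ∫⁻ ω₁ in A₁, K₂ ω₁ A₂ ∂((P.restrict (X₅ ⁻¹' A₅)).map X₁) =
        P (X₁ ⁻¹' A₁ ∩ X₂ ⁻¹' A₂ ∩ X₅ ⁻¹' A₅ ∩ X₆ ⁻¹' A₆)) :
    ∀ (A₁ : Set Ω₁) (A₂ : Set Ω₂) (A₃ : Set Ω₃),
      MeasurableSet A₁ → MeasurableSet A₂ → MeasurableSet A₃ →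
      ∫⁻ ω₁ in A₁, (∫⁻ ω₂ in A₂, K₂₃ (ω₁, ω₂) A₃ ∂(K₂ ω₁))
          ∂((P.restrict (X₅ ⁻¹' A₅)).map X₁) =
        P (X₁ ⁻¹' A₁ ∩ X₂ ⁻¹' A₂ ∩ X₃ ⁻¹' A₃ ∩ X₄ ⁻¹' A₄ ∩ X₅ ⁻¹' A₅ ∩ X₆ ⁻¹' A₆) := by
  intro A₁ A₂ A₃ h₁ h₂ h₃
  set ν : Measure Ω₁ := (P.restrict (X₅ ⁻¹' A₅)).map X₁ with hν
  set μ : Measure (Ω₁ × Ω₂) :=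
    (P.restrict (X₅ ⁻¹' A₅ ∩ X₆ ⁻¹' A₆)).map (fun ω => (X₁ ω, X₂ ω)) with hμ
  have hXmeas : Measurable fun ω => (X₁ ω, X₂ ω) := hX₁.prodMk hX₂
  have hνfin : IsFiniteMeasure ν := by
    rw [hν]; infer_instance
  have hμeq : μ = ν.compProd K₂ := by
    refine MeasureTheory.ext_of_generate_finite _ generateFrom_prod.symm isPiSystem_prod ?_ ?_
    · rintro s ⟨B₁, hB₁, B₂, hB₂, rfl⟩
      simp only [Set.mem_setOf_eq] at hB₁ hB₂
      rw [Measure.compProd_apply_prod hB₁ hB₂, hK₂ B₁ B₂ hB₁ hB₂,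
        hμ, Measure.map_apply hXmeas (hB₁.prod hB₂),
        Measure.restrict_apply (hXmeas (hB₁.prod hB₂))]
      congr 1
      ext ω
      simp [Set.mem_prod, and_assoc]
    · rw [← Set.univ_prod_univ, Measure.compProd_apply_prod MeasurableSet.univ
        MeasurableSet.univ, hK₂ Set.univ Set.univ MeasurableSet.univ MeasurableSet.univ]
      simp only [Set.univ_prod_univ]
      rw [hμ, Measure.map_apply hXmeas MeasurableSet.univ, Set.preimage_univ,
        Measure.restrict_apply MeasurableSet.univ, Set.univ_inter]
      simp
  have key : ∫⁻ ω₁ in A₁, (∫⁻ ω₂ in A₂, K₂₃ (ω₁, ω₂) A₃ ∂(K₂ ω₁)) ∂ν =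
      ∫⁻ p in A₁ ×ˢ A₂, K₂₃ p A₃ ∂μ := by
    rw [hμeq, Measure.setLIntegral_compProd (K₂₃.measurable_coe h₃) h₁ h₂]
  rw [key, hK₂₃ (A₁ ×ˢ A₂) A₃ (h₁.prod h₂) h₃]
  rfl
end

section
/- Let (Ω,𝓕,P) be a probability space and Xᵢ : Ω → Ωᵢ (i = 1,2,3,4) measurable maps into measurable spaces. Suppose the pair (X₁, X₃) is independent of the pair (X₂, X₄) (as random objects into Ω₁ × Ω₃ and Ω₂ × Ω₄ respectively). Then for all fixed measurable sets A₃ ⊆ Ω₃ and A₄ ⊆ Ω₄: (i) (P.restrict (X₃⁻¹(A₃) ∩ X₄⁻¹(A₄))).map (ω ↦ (X₁(ω), X₂(ω))) equals the product measure ((P.restrict (X₃⁻¹(A₃))).map X₁) ×ₘ ((P.restrict (X₄⁻¹(A₄))).map X₂); (ii) if P(X₃⁻¹(A₃)) > 0, then the constant kernel ω₁ ↦ (P.restrict (X₄⁻¹(A₄))).map X₂ satisfies ∫_{A₁} ((P.restrict (X₄⁻¹(A₄))).map X₂)(A₂) d(((P.restrict (X₃⁻¹(A₃))).map X₁)(ω₁))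 = P(X₁⁻¹(A₁) ∩ X₂⁻¹(A₂) ∩ X₃⁻¹(A₃) ∩ X₄⁻¹(A₄)) for all measurable A₁ ⊆ Ω₁, A₂ ⊆ Ω₂, i.e. it is a kernel version of P[X₂, X₄∈A₄ | X₁, X₃∈A₃]. (Paper's Theorem 3.8, part 2.) -/
open MeasureTheory ProbabilityTheory

/-- Paper's Theorem 3.8, part 2: if `(X₁, X₃)` is independent of `(X₂, X₄)`, then the
co-occurrence measure of `(X₁, X₂)` with `X₃ ∈ A₃ ∧ X₄ ∈ A₄` is the product of the
co-occurrence measures `P[X₁, X₃ ∈ A₃]` and `P[X₂, X₄ ∈ A₄]`; moreover if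
`P(X₃⁻¹ A₃) > 0`, the constant kernel `ω₁ ↦ P[X₂, X₄ ∈ A₄]` is a kernel version of
`P[X₂, X₄ ∈ A₄ | X₁, X₃ ∈ A₃]`. -/
theorem cooccurrence_of_independent_pairs
    {Ω Ω₁ Ω₂ Ω₃ Ω₄ : Type*} [MeasurableSpace Ω] [MeasurableSpace Ω₁] [MeasurableSpace Ω₂]
    [MeasurableSpace Ω₃] [MeasurableSpace Ω₄]
    (P : Measure Ω) [IsProbabilityMeasure P]
    {X₁ : Ω → Ω₁} {X₂ : Ω → Ω₂} {X₃ : Ω → Ω₃} {X₄ : Ω → Ω₄}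
    (hX₁ : Measurable X₁) (hX₂ : Measurable X₂) (hX₃ : Measurable X₃)
    (hX₄ : Measurable X₄)
    (hIndep : IndepFun (fun ω => (X₁ ω, X₃ ω)) (fun ω => (X₂ ω, X₄ ω)) P)
    {A₃ : Set Ω₃} {A₄ : Set Ω₄} (hA₃ : MeasurableSet A₃) (hA₄ : MeasurableSet A₄) :
    ((P.restrict (X₃ ⁻¹' A₃ ∩ X₄ ⁻¹' A₄)).map (fun ω => (X₁ ω, X₂ ω)) =
      ((P.restrict (X₃ ⁻¹' A₃)).map X₁).prod ((P.restrict (X₄ ⁻¹' A₄)).map X₂)) ∧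
    (0 < P (X₃ ⁻¹' A₃) →
      ∀ (A₁ : Set Ω₁) (A₂ : Set Ω₂), MeasurableSet A₁ → MeasurableSet A₂ →
        ∫⁻ _ω₁ in A₁, (P.restrict (X₄ ⁻¹' A₄)).map X₂ A₂
            ∂((P.restrict (X₃ ⁻¹' A₃)).map X₁) =
          P (X₁ ⁻¹' A₁ ∩ X₂ ⁻¹' A₂ ∩ X₃ ⁻¹' A₃ ∩ X₄ ⁻¹' A₄)) := by
  have key : ∀ (A₁ : Set Ω₁) (A₂ : Set Ω₂), MeasurableSet A₁ → MeasurableSet A₂ →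
      P (X₁ ⁻¹' A₁ ∩ X₂ ⁻¹' A₂ ∩ X₃ ⁻¹' A₃ ∩ X₄ ⁻¹' A₄) =
        P (X₁ ⁻¹' A₁ ∩ X₃ ⁻¹' A₃) * P (X₂ ⁻¹' A₂ ∩ X₄ ⁻¹' A₄) := by
    intro A₁ A₂ hA₁ hA₂
    have := hIndep.measure_inter_preimage_eq_mul (A₁ ×ˢ A₃) (A₂ ×ˢ A₄)
      (hA₁.prod hA₃) (hA₂.prod hA₄)
    have e1 : (fun ω => (X₁ ω, X₃ ω)) ⁻¹' (A₁ ×ˢ A₃) = X₁ ⁻¹' A₁ ∩ X₃ ⁻¹' A₃ := rfl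
    have e2 : (fun ω => (X₂ ω, X₄ ω)) ⁻¹' (A₂ ×ˢ A₄) = X₂ ⁻¹' A₂ ∩ X₄ ⁻¹' A₄ := rfl
    rw [e1, e2] at this
    rw [← this]
    congr 1
    ext ω
    simp [Set.mem_inter_iff]
    tauto
  constructor
  · symm
    apply Measure.prod_eq
    intro s t hs ht
    rw [Measure.map_apply (hX₁.prodMk hX₂) (hs.prod ht),
      Measure.map_apply hX₁ hs, Measure.map_apply hX₂ ht,
      Measure.restrict_apply (hX₁ hs), Measure.restrict_apply (hX₂ ht),
      Measure.restrict_apply ((hX₁.prodMk hX₂) (hs.prod ht))]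
    have e : (fun ω => (X₁ ω, X₂ ω)) ⁻¹' (s ×ˢ t) = X₁ ⁻¹' s ∩ X₂ ⁻¹' t := rfl
    rw [e]
    have : X₁ ⁻¹' s ∩ X₂ ⁻¹' t ∩ (X₃ ⁻¹' A₃ ∩ X₄ ⁻¹' A₄) =
        X₁ ⁻¹' s ∩ X₂ ⁻¹' t ∩ X₃ ⁻¹' A₃ ∩ X₄ ⁻¹' A₄ := by
      ext ω; simp [Set.mem_inter_iff]; tauto
    rw [this, key s t hs ht]
  · intro _ A₁ A₂ hA₁ hA₂
    rw [setLIntegral_const, Measure.map_apply hX₁ hA₁, Measure.map_apply hX₂ hA₂,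
      Measure.restrict_apply (hX₁ hA₁), Measure.restrict_apply (hX₂ hA₂),
      key A₁ A₂ hA₁ hA₂, mul_comm]
end

section
/- Let (Ω,𝓕,P) be a probability space and Xᵢ : Ω → Ωᵢ (i = 1,…,6) measurable maps into measurable spaces. Suppose the quadruple (X₁, X₃, X₄, X₆) is independent of the pair (X₂, X₅). Fix measurable sets A₄ ⊆ Ω₄, A₆ ⊆ Ω₆ with P(X₄⁻¹(A₄)) > 0, set ν := (P.restrict (X₄⁻¹(A₄))).map X₁, and suppose K is a finite kernel from Ω₁ to Ω₃ satisfying ∫_{A₁} K(ω₁)(S₃) dν = P(X₁⁻¹(A₁) ∩ X₃⁻¹(S₃) ∩ X₄⁻¹(A₄) ∩ X₆⁻¹(A₆)) for all measurable A₁, S₃ (a kernel version of P[X₃, X₆∈A₆ | X₁, X₄∈A₄]). Then for every fixed measurable A₅ ⊆ Ω₅, the kernel ω₁ ↦ K(ω₁) ×ₘ ((P.restrict (X₅⁻¹(A₅))).map X₂) from Ω₁ to Ω₃ × Ω₂ satisfies ∫_{A₁} K(ω₁)(S₃) · ((P.restrict (X₅⁻¹(A₅))).map X₂)(S₂) dν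 = P(X₁⁻¹(A₁) ∩ X₂⁻¹(S₂) ∩ X₃⁻¹(S₃) ∩ X₄⁻¹(A₄) ∩ X₅⁻¹(A₅) ∩ X₆⁻¹(A₆)) for all measurable A₁ ⊆ Ω₁, S₂ ⊆ Ω₂, S₃ ⊆ Ω₃; i.e. it is a kernel version of P[X₃, X₂; X₅∈A₅, X₆∈A₆ | X₁, X₄∈A₄]. (Paper's Theorem 3.8, part 3.) -/
open MeasureTheory ProbabilityTheory

/-- Paper's Theorem 3.8, part 3: if `(X₁, X₃, X₄, X₆)` is independent of `(X₂, X₅)` and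
`K` is a kernel version of `P[X₃, X₆ ∈ A₆ | X₁, X₄ ∈ A₄]`, then for every fixed
measurable `A₅` the product kernel `ω₁ ↦ K(ω₁) × P[X₂, X₅ ∈ A₅]` is a kernel version of
`P[X₃, X₂; X₅ ∈ A₅, X₆ ∈ A₆ | X₁, X₄ ∈ A₄]`. -/
theorem conditional_cooccurrence_kernel_prod_of_indep
    {Ω Ω₁ Ω₂ Ω₃ Ω₄ Ω₅ Ω₆ : Type*} [MeasurableSpace Ω] [MeasurableSpace Ω₁]
    [MeasurableSpace Ω₂] [MeasurableSpace Ω₃] [MeasurableSpace Ω₄] [MeasurableSpace Ω₅]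
    [MeasurableSpace Ω₆]
    (P : Measure Ω) [IsProbabilityMeasure P]
    {X₁ : Ω → Ω₁} {X₂ : Ω → Ω₂} {X₃ : Ω → Ω₃} {X₄ : Ω → Ω₄} {X₅ : Ω → Ω₅} {X₆ : Ω → Ω₆}
    (hX₁ : Measurable X₁) (hX₂ : Measurable X₂) (hX₃ : Measurable X₃)
    (hX₄ : Measurable X₄) (hX₅ : Measurable X₅) (hX₆ : Measurable X₆)
    (hIndep : IndepFun (fun ω => (X₁ ω, X₃ ω, X₄ ω, X₆ ω)) (fun ω => (X₂ ω, X₅ ω)) P)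
    {A₄ : Set Ω₄} {A₆ : Set Ω₆} (hA₄ : MeasurableSet A₄) (hA₆ : MeasurableSet A₆)
    (hpos : 0 < P (X₄ ⁻¹' A₄))
    (K : Kernel Ω₁ Ω₃) [IsFiniteKernel K]
    (hK : ∀ (A₁ : Set Ω₁) (S₃ : Set Ω₃), MeasurableSet A₁ → MeasurableSet S₃ →
      ∫⁻ ω₁ in A₁, K ω₁ S₃ ∂((P.restrict (X₄ ⁻¹' A₄)).map X₁) =
        P (X₁ ⁻¹' A₁ ∩ X₃ ⁻¹' S₃ ∩ X₄ ⁻¹' A₄ ∩ X₆ ⁻¹' A₆)) :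
    ∀ A₅ : Set Ω₅, MeasurableSet A₅ →
      ∀ (A₁ : Set Ω₁) (S₂ : Set Ω₂) (S₃ : Set Ω₃),
        MeasurableSet A₁ → MeasurableSet S₂ → MeasurableSet S₃ →
        ∫⁻ ω₁ in A₁, K ω₁ S₃ * (P.restrict (X₅ ⁻¹' A₅)).map X₂ S₂
            ∂((P.restrict (X₄ ⁻¹' A₄)).map X₁) =
          P (X₁ ⁻¹' A₁ ∩ X₂ ⁻¹' S₂ ∩ X₃ ⁻¹' S₃ ∩ X₄ ⁻¹' A₄ ∩ X₅ ⁻¹' A₅ ∩ X₆ ⁻¹' A₆) := by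
  intro A₅ hA₅ A₁ S₂ S₃ hA₁ hS₂ hS₃
  have hc : (P.restrict (X₅ ⁻¹' A₅)).map X₂ S₂ = P (X₂ ⁻¹' S₂ ∩ X₅ ⁻¹' A₅) := by
    rw [Measure.map_apply hX₂ hS₂, Measure.restrict_apply (hX₂ hS₂)]
  have hconst : ∫⁻ ω₁ in A₁, K ω₁ S₃ * (P.restrict (X₅ ⁻¹' A₅)).map X₂ S₂
      ∂((P.restrict (X₄ ⁻¹' A₄)).map X₁)
      = (∫⁻ ω₁ in A₁, K ω₁ S₃ ∂((P.restrict (X₄ ⁻¹' A₄)).map X₁)) *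
        (P.restrict (X₅ ⁻¹' A₅)).map X₂ S₂ := by
    rw [lintegral_mul_const'' _ ((K.measurable_coe hS₃).aemeasurable)]
  rw [hconst, hK A₁ S₃ hA₁ hS₃, hc]
  have hInd := hIndep.measure_inter_preimage_eq_mul
    (s := A₁ ×ˢ (S₃ ×ˢ (A₄ ×ˢ A₆))) (t := S₂ ×ˢ A₅)
    (hA₁.prod (hS₃.prod (hA₄.prod hA₆))) (hS₂.prod hA₅)
  have h1 : (fun ω => (X₁ ω, X₃ ω, X₄ ω, X₆ ω)) ⁻¹' (A₁ ×ˢ (S₃ ×ˢ (A₄ ×ˢ A₆)))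
      = X₁ ⁻¹' A₁ ∩ X₃ ⁻¹' S₃ ∩ X₄ ⁻¹' A₄ ∩ X₆ ⁻¹' A₆ := by
    ext ω; simp [Set.mem_prod, and_assoc]
  have h2 : (fun ω => (X₂ ω, X₅ ω)) ⁻¹' (S₂ ×ˢ A₅) = X₂ ⁻¹' S₂ ∩ X₅ ⁻¹' A₅ := by
    ext ω; simp [Set.mem_prod]
  rw [h1, h2] at hInd
  rw [← hInd]
  congr 1
  ext ω; simp; tauto
end

section
/- Let (Ω,𝓕,P) be a probability space, (Ω₁,𝓕₁,μ₁) and (Ω₂,𝓕₂,μ₂) σ-finite measure spaces, and X : Ω → Ω₁, Y : Ω → Ω₂ measurable maps. Suppose f : Ω₁ × Ω₂ → [0,∞] is measurable with ∫⁻_C f d(μ₁ ×ₘ μ₂) = P((ω : (X(ω), Y(ω)) ∈ C)) for every measurable C ⊆ Ω₁ × Ω₂. Define, for ω₁ ∈ Ω₁ and measurable A₂ ⊆ Ω₂, K(ω₁, A₂) := (∫⁻_{A₂} f(ω₁, ω₂) dμ₂) / (∫⁻_{Ω₂} f(ω₁, ω₂) dμ₂) when 0 < ∫⁻_{Ω₂}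 f(ω₁, ω₂) dμ₂ < ∞, and K(ω₁, A₂) := 0 otherwise. Then for each ω₁, K(ω₁, ·) is a measure on Ω₂, for each measurable A₂ the function K(·, A₂) is 𝓕₁-measurable, and ∫⁻_{A₁} K(ω₁, A₂) d((P.map X)(ω₁)) = P(X⁻¹(A₁) ∩ Y⁻¹(A₂)) for all measurable A₁ ⊆ Ω₁ and A₂ ⊆ Ω₂; that is, K is a kernel version of the conditional probability P[Y|X]. (Paper's Theorem 4.6.) -/
open MeasureTheory
open scoped Classical ENNReal

/-- The candidate conditional kernel built from a joint density `f`: for each `ω₁`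
it is the measure `A₂ ↦ (∫⁻_{A₂} f(ω₁,·) dμ₂) / (∫⁻ f(ω₁,·) dμ₂)` when the
denominator is positive and finite, and the zero measure otherwise. -/
noncomputable def condProbOfDensity {Ω₁ Ω₂ : Type*} [MeasurableSpace Ω₁]
    [MeasurableSpace Ω₂] (μ₂ : Measure Ω₂) (f : Ω₁ × Ω₂ → ℝ≥0∞) : Ω₁ → Measure Ω₂ :=
  fun ω₁ =>
    if 0 < ∫⁻ ω₂, f (ω₁, ω₂) ∂μ₂ ∧ ∫⁻ ω₂, f (ω₁, ω₂) ∂μ₂ < ⊤ then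
      (∫⁻ ω₂, f (ω₁, ω₂) ∂μ₂)⁻¹ • μ₂.withDensity (fun ω₂ => f (ω₁, ω₂))
    else 0

/-!
Taking `C = A₁ ×ˢ univ` in the density identity shows that the law of `X` has density
`g ω₁ = ∫⁻ f (ω₁, ·) ∂μ₂` with respect to `μ₁`; as `P` is finite, `g < ∞` holds `μ₁`-a.e.
Wherever `g` is finite, `g ω₁ * K ω₁ A₂ = ∫⁻_{A₂} f (ω₁, ·) ∂μ₂` (both sides vanish when
`g ω₁ = 0`), so integrating over `A₁` against `P.map X = μ₁.withDensity g` and applying Tonelli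
gives `∫⁻_{A₁ ×ˢ A₂} f ∂(μ₁.prod μ₂) = P (X ⁻¹' A₁ ∩ Y ⁻¹' A₂)`.
-/

theorem setLIntegral_prod_of_sFinite_right {α β : Type*} [MeasurableSpace α]
    [MeasurableSpace β] {μ : Measure α} {ν : Measure β} [SFinite ν] {f : α × β → ℝ≥0∞}
    (hf : Measurable f) {s : Set α} {t : Set β} (hs : MeasurableSet s) (ht : MeasurableSet t) :
    ∫⁻ z in s ×ˢ t, f z ∂μ.prod ν = ∫⁻ x in s, ∫⁻ y in t, f (x, y) ∂ν ∂μ := by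
  rw [← lintegral_indicator (hs.prod ht),
    lintegral_prod _ (hf.indicator (hs.prod ht)).aemeasurable, ← lintegral_indicator hs]
  congr 1 with x
  by_cases hx : x ∈ s
  · simp only [Set.indicator_of_mem hx, ← lintegral_indicator ht]
    congr 1 with y
    by_cases hy : y ∈ t <;> simp [hx, hy]
  · simp [hx]

section

variable {Ω₁ Ω₂ : Type*} [MeasurableSpace Ω₁] [MeasurableSpace Ω₂] {μ₂ : Measure Ω₂}
  {f : Ω₁ × Ω₂ → ℝ≥0∞} {A₂ : Set Ω₂}

theorem condProbOfDensity_apply (hA₂ : MeasurableSet A₂) (ω₁ : Ω₁) :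
    condProbOfDensity μ₂ f ω₁ A₂ =
      if 0 < ∫⁻ ω₂, f (ω₁, ω₂) ∂μ₂ ∧ ∫⁻ ω₂, f (ω₁, ω₂) ∂μ₂ < ⊤ then
        (∫⁻ ω₂, f (ω₁, ω₂) ∂μ₂)⁻¹ * ∫⁻ ω₂ in A₂, f (ω₁, ω₂) ∂μ₂
      else 0 := by
  unfold condProbOfDensity
  split_ifs <;> simp [withDensity_apply _ hA₂]

theorem measurable_condProbOfDensity_apply [SFinite μ₂] (hf : Measurable f)
    (hA₂ : MeasurableSet A₂) : Measurable fun ω₁ => condProbOfDensity μ₂ f ω₁ A₂ := by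
  have hg : Measurable fun ω₁ => ∫⁻ ω₂, f (ω₁, ω₂) ∂μ₂ := hf.lintegral_prod_right'
  simp_rw [condProbOfDensity_apply hA₂]
  exact Measurable.ite (hg measurableSet_Ioo) (hg.inv.mul hf.lintegral_prod_right') measurable_const

theorem lintegral_mul_condProbOfDensity_apply (hA₂ : MeasurableSet A₂) {ω₁ : Ω₁}
    (hfin : ∫⁻ ω₂, f (ω₁, ω₂) ∂μ₂ < ⊤) :
    (∫⁻ ω₂, f (ω₁, ω₂) ∂μ₂) * condProbOfDensity μ₂ f ω₁ A₂ = ∫⁻ ω₂ in A₂, f (ω₁, ω₂) ∂μ₂ := by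
  rw [condProbOfDensity_apply hA₂]
  split_ifs with hpos
  · rw [← mul_assoc, ENNReal.mul_inv_cancel hpos.1.ne' hfin.ne, one_mul]
  · have hzero : ∫⁻ ω₂, f (ω₁, ω₂) ∂μ₂ = 0 := by
      simpa [hfin] using hpos
    have : ∫⁻ ω₂ in A₂, f (ω₁, ω₂) ∂μ₂ = 0 :=
      le_antisymm (hzero ▸ setLIntegral_le_lintegral _ _) zero_le
    rw [this, mul_zero]

end

theorem map_eq_withDensity_lintegral_of_density {Ω Ω₁ Ω₂ : Type*} [MeasurableSpace Ω]
    [MeasurableSpace Ω₁] [MeasurableSpace Ω₂] {P : Measure Ω} {μ₁ : Measure Ω₁}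
    {μ₂ : Measure Ω₂} [SFinite μ₂] {X : Ω → Ω₁} {Y : Ω → Ω₂} (hX : Measurable X)
    {f : Ω₁ × Ω₂ → ℝ≥0∞} (hf : Measurable f)
    (hfdens : ∀ C : Set (Ω₁ × Ω₂), MeasurableSet C →
      ∫⁻ x in C, f x ∂(μ₁.prod μ₂) = P ((fun ω => (X ω, Y ω)) ⁻¹' C)) :
    P.map X = μ₁.withDensity fun ω₁ => ∫⁻ ω₂, f (ω₁, ω₂) ∂μ₂ := by
  ext A₁ hA₁
  have hpre : (fun ω => (X ω, Y ω)) ⁻¹' (A₁ ×ˢ Set.univ) = X ⁻¹' A₁ := by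
    simp [Set.mk_preimage_prod]
  rw [Measure.map_apply hX hA₁, withDensity_apply _ hA₁, ← hpre,
    ← hfdens _ (hA₁.prod MeasurableSet.univ),
    setLIntegral_prod_of_sFinite_right hf hA₁ MeasurableSet.univ]
  simp_rw [Measure.restrict_univ]

theorem condProbOfDensity_is_conditional_probability_general
    {Ω Ω₁ Ω₂ : Type*} [MeasurableSpace Ω] [MeasurableSpace Ω₁] [MeasurableSpace Ω₂]
    (P : Measure Ω) [IsProbabilityMeasure P]
    (μ₁ : Measure Ω₁) (μ₂ : Measure Ω₂) [SigmaFinite μ₂]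
    {X : Ω → Ω₁} {Y : Ω → Ω₂} (hX : Measurable X)
    (f : Ω₁ × Ω₂ → ℝ≥0∞) (hf : Measurable f)
    (hfdens : ∀ C : Set (Ω₁ × Ω₂), MeasurableSet C →
      ∫⁻ x in C, f x ∂(μ₁.prod μ₂) = P ((fun ω => (X ω, Y ω)) ⁻¹' C)) :
    (∀ A₂ : Set Ω₂, MeasurableSet A₂ →
      Measurable (fun ω₁ => condProbOfDensity μ₂ f ω₁ A₂)) ∧
    (∀ (A₁ : Set Ω₁) (A₂ : Set Ω₂), MeasurableSet A₁ → MeasurableSet A₂ →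
      ∫⁻ ω₁ in A₁, condProbOfDensity μ₂ f ω₁ A₂ ∂(P.map X) =
        P (X ⁻¹' A₁ ∩ Y ⁻¹' A₂)) := by
  have hmarg := map_eq_withDensity_lintegral_of_density hX hf hfdens
  have hfin : ∀ᵐ ω₁ ∂μ₁, ∫⁻ ω₂, f (ω₁, ω₂) ∂μ₂ < ⊤ := by
    refine ae_lt_top hf.lintegral_prod_right' ?_
    rw [← setLIntegral_univ, ← withDensity_apply _ MeasurableSet.univ, ← hmarg]
    exact measure_ne_top _ _
  refine ⟨fun A₂ hA₂ => measurable_condProbOfDensity_apply hf hA₂, fun A₁ A₂ hA₁ hA₂ => ?_⟩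
  calc ∫⁻ ω₁ in A₁, condProbOfDensity μ₂ f ω₁ A₂ ∂(P.map X)
      = ∫⁻ ω₁ in A₁, (∫⁻ ω₂, f (ω₁, ω₂) ∂μ₂) * condProbOfDensity μ₂ f ω₁ A₂ ∂μ₁ := by
        rw [hmarg, restrict_withDensity hA₁, lintegral_withDensity_eq_lintegral_mul _
          hf.lintegral_prod_right' (measurable_condProbOfDensity_apply hf hA₂)]
        rfl
    _ = ∫⁻ ω₁ in A₁, ∫⁻ ω₂ in A₂, f (ω₁, ω₂) ∂μ₂ ∂μ₁ :=
        setLIntegral_congr_fun_ae hA₁ (hfin.mono fun ω₁ h _ =>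
          lintegral_mul_condProbOfDensity_apply hA₂ h)
    _ = P (X ⁻¹' A₁ ∩ Y ⁻¹' A₂) := by
        rw [← setLIntegral_prod_of_sFinite_right hf hA₁ hA₂, hfdens _ (hA₁.prod hA₂),
          Set.mk_preimage_prod]

/-- Paper's Theorem 4.6: if `f` is a density of the joint law of `(X, Y)` with respect
to `μ₁ × μ₂`, then the normalized family `condProbOfDensity μ₂ f` is measurable in
`ω₁` and is a kernel version of the conditional probability `P[Y | X]`:
`∫⁻_{A₁} K(ω₁)(A₂) d(P.map X) = P(X⁻¹ A₁ ∩ Y⁻¹ A₂)` for all measurable `A₁, A₂`. -/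
theorem condProbOfDensity_is_conditional_probability
    {Ω Ω₁ Ω₂ : Type*} [MeasurableSpace Ω] [MeasurableSpace Ω₁] [MeasurableSpace Ω₂]
    (P : Measure Ω) [IsProbabilityMeasure P]
    (μ₁ : Measure Ω₁) (μ₂ : Measure Ω₂) [SigmaFinite μ₁] [SigmaFinite μ₂]
    {X : Ω → Ω₁} {Y : Ω → Ω₂} (hX : Measurable X) (hY : Measurable Y)
    (f : Ω₁ × Ω₂ → ℝ≥0∞) (hf : Measurable f)
    (hfdens : ∀ C : Set (Ω₁ × Ω₂), MeasurableSet C →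
      ∫⁻ x in C, f x ∂(μ₁.prod μ₂) = P ((fun ω => (X ω, Y ω)) ⁻¹' C)) :
    (∀ A₂ : Set Ω₂, MeasurableSet A₂ →
      Measurable (fun ω₁ => condProbOfDensity μ₂ f ω₁ A₂)) ∧
    (∀ (A₁ : Set Ω₁) (A₂ : Set Ω₂), MeasurableSet A₁ → MeasurableSet A₂ →
      ∫⁻ ω₁ in A₁, condProbOfDensity μ₂ f ω₁ A₂ ∂(P.map X) =
        P (X ⁻¹' A₁ ∩ Y ⁻¹' A₂)) :=
  condProbOfDensity_is_conditional_probability_general P μ₁ μ₂ hX f hf hfdens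
end

section
/- Let (Ω,𝓕,P) be a probability space, ι a finite index type, (Ωᵢ,𝓕ᵢ,μᵢ) σ-finite measure spaces for i ∈ ι, and Xᵢ : Ω → Ωᵢ measurable maps which form an independent family. Let X : Ω → Π i, Ωᵢ be the joint map ω ↦ (i ↦ Xᵢ(ω)). Suppose f : (Π i, Ωᵢ) → [0,∞] is measurable and is a density of P.map X with respect to the product measure Measure.pi μ, and for each i ∈ ι, fᵢ : Ωᵢ → [0,∞] is measurable and is a density of P.map Xᵢ with respect to μᵢ. Then f(ω) = ∏_{i∈ι} fᵢ(ω i) for (Measure.pi μ)-almost every ω ∈ Π i, Ωᵢ. (Paper's Corollary 4.5.1: the joint density of independent random objects factorizes into the product of their marginal densities.) -/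
open MeasureTheory ProbabilityTheory
open scoped ENNReal

/-!
Both `f` and `ω ↦ ∏ i, fᵢ (ω i)` are densities of one and the same measure with respect to
`Measure.pi μ`. For `f` this is the hypothesis, the measure being the joint law. For the product,
independence makes the joint law the product of the marginal laws `(μ i).withDensity fᵢ`, and by
Tonelli the product of densities is a density of the product measure. Densities with respect to
a σ-finite measure are unique almost everywhere.
-/

theorem Set.indicator_univ_pi_prod_apply {ι : Type*} {α : ι → Type*} [Fintype ι]
    (s : ∀ i, Set (α i)) (g : ∀ i, α i → ℝ≥0∞) (x : ∀ i, α i) :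
    (Set.univ.pi s).indicator (fun y => ∏ i, g i (y i)) x = ∏ i, (s i).indicator (g i) (x i) := by
  classical
  simp only [Set.indicator, Set.mem_univ_pi, Finset.prod_ite_zero, Finset.mem_univ, forall_const]

section PiProduct

variable {ι : Type*} [Fintype ι] {α : ι → Type*} [∀ i, MeasurableSpace (α i)]
  (μ : ∀ i, Measure (α i)) [∀ i, SigmaFinite (μ i)] {g : ∀ i, α i → ℝ≥0∞}

theorem lmarginal_prod_apply [DecidableEq ι] (hg : ∀ i, Measurable (g i))
    (s : Finset ι) (x : ∀ i, α i) :
    (∫⋯∫⁻_s, (fun y => ∏ i, g i (y i)) ∂μ) x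
      = (∏ i ∈ s, ∫⁻ t, g i t ∂μ i) * ∏ i ∈ sᶜ, g i (x i) := by
  induction s using Finset.induction generalizing x with
  | empty => simp
  | @insert i s hi ih =>
    have hupdate (t : α i) : ∏ j ∈ sᶜ, g j (Function.update x i t j)
        = g i t * ∏ j ∈ (insert i s)ᶜ, g j (x j) := by
      rw [← Finset.mul_prod_erase _ _ (Finset.mem_compl.2 hi), Finset.compl_insert,
        Function.update_self]
      congr 1
      refine Finset.prod_congr rfl fun j hj => ?_
      rw [Function.update_of_ne (Finset.ne_of_mem_erase hj)]
    rw [lmarginal_insert _ (by fun_prop) hi]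
    simp_rw [ih, hupdate]
    rw [lintegral_const_mul _ ((hg i).mul_const _), lintegral_mul_const _ (hg i),
      Finset.prod_insert hi]
    ring

theorem lintegral_pi_prod (hg : ∀ i, Measurable (g i)) :
    ∫⁻ x, ∏ i, g i (x i) ∂Measure.pi μ = ∏ i, ∫⁻ t, g i t ∂μ i := by
  classical
  rcases isEmpty_or_nonempty (∀ i, α i) with hempty | hne
  · obtain ⟨i, hi⟩ := isEmpty_pi.1 hempty
    have hμi : ∫⁻ t, g i t ∂μ i = 0 := by
      rw [(μ i).eq_zero_of_isEmpty, lintegral_zero_measure]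
    rw [(Measure.pi μ).eq_zero_of_isEmpty, lintegral_zero_measure,
      Finset.prod_eq_zero (Finset.mem_univ i) hμi]
  · rw [lintegral_eq_lmarginal_univ hne.some, lmarginal_prod_apply μ hg]
    simp

theorem withDensity_pi_prod_eq_pi (hg : ∀ i, Measurable (g i))
    [∀ i, SigmaFinite ((μ i).withDensity (g i))] :
    (Measure.pi μ).withDensity (fun x => ∏ i, g i (x i))
      = Measure.pi fun i => (μ i).withDensity (g i) := by
  refine (Measure.pi_eq fun s hs => ?_).symm
  rw [withDensity_apply _ (MeasurableSet.univ_pi hs),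
    ← lintegral_indicator (MeasurableSet.univ_pi hs)]
  simp_rw [Set.indicator_univ_pi_prod_apply]
  rw [lintegral_pi_prod μ fun i => (hg i).indicator (hs i)]
  refine Finset.prod_congr rfl fun i _ => ?_
  rw [lintegral_indicator (hs i), withDensity_apply _ (hs i)]

end PiProduct

theorem withDensity_eq_of_lintegral_eq {β : Type*} [MeasurableSpace β] {μ ν : Measure β}
    {f : β → ℝ≥0∞} (h : ∀ A, MeasurableSet A → ∫⁻ x in A, f x ∂μ = ν A) :
    μ.withDensity f = ν :=
  Measure.ext fun A hA => by rw [withDensity_apply f hA, h A hA]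

/-- Paper's Corollary 4.5.1: if the random objects `Xᵢ` are independent and `f` is a
density of the joint law with respect to the product reference measure `Measure.pi μ`,
while each `fᵢ` is a density of the law of `Xᵢ` with respect to `μᵢ`, then the joint
density factorizes: `f(ω) = ∏ᵢ fᵢ(ωᵢ)` for `Measure.pi μ`-a.e. `ω`. -/
theorem joint_density_eq_prod_of_marginals_of_indep
    {Ω : Type*} [MeasurableSpace Ω] (P : Measure Ω) [IsProbabilityMeasure P]
    {ι : Type*} [Fintype ι] {α : ι → Type*} [∀ i, MeasurableSpace (α i)]
    (μ : ∀ i, Measure (α i)) [∀ i, SigmaFinite (μ i)]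
    (X : ∀ i, Ω → α i) (hX : ∀ i, Measurable (X i))
    (hIndep : iIndepFun X P)
    (f : (∀ i, α i) → ℝ≥0∞) (hf : Measurable f)
    (hfdens : ∀ A : Set (∀ i, α i), MeasurableSet A →
      ∫⁻ ω in A, f ω ∂(Measure.pi μ) = P ((fun ω i => X i ω) ⁻¹' A))
    (fmar : ∀ i, α i → ℝ≥0∞) (hfmar : ∀ i, Measurable (fmar i))
    (hfmardens : ∀ i, ∀ A : Set (α i), MeasurableSet A →
      ∫⁻ x in A, fmar i x ∂(μ i) = P (X i ⁻¹' A)) :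
    ∀ᵐ ω ∂(Measure.pi μ), f ω = ∏ i, fmar i (ω i) := by
  have hjoint : (Measure.pi μ).withDensity f = P.map (fun ω i => X i ω) :=
    withDensity_eq_of_lintegral_eq fun A hA => by
      rw [hfdens A hA, Measure.map_apply (measurable_pi_lambda _ hX) hA]
  have hmarginal (i : ι) : (μ i).withDensity (fmar i) = P.map (X i) :=
    withDensity_eq_of_lintegral_eq fun A hA => by
      rw [hfmardens i A hA, Measure.map_apply (hX i) hA]
  have : ∀ i, SigmaFinite ((μ i).withDensity (fmar i)) := fun i => by
    rw [hmarginal i]; infer_instance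
  refine (withDensity_eq_iff_of_sigmaFinite hf.aemeasurable
    (Measurable.aemeasurable (by fun_prop))).1 ?_
  rw [withDensity_pi_prod_eq_pi μ hfmar, hjoint,
    hIndep.map_fun_eq_pi_map fun i => (hX i).aemeasurable]
  simp_rw [hmarginal]
end

section
/- Let (Ω,𝓕,P) be a probability space, ι a finite index type, (Ωᵢ,𝓕ᵢ,μᵢ) σ-finite measure spaces for i ∈ ι, and Xᵢ : Ω → Ωᵢ measurable maps. Let X : Ω → Π i, Ωᵢ be the joint map ω ↦ (i ↦ Xᵢ(ω)). Suppose f_P : (Π i, Ωᵢ) → [0,∞] is measurable and is a density of P.map X with respect to the product of the marginal laws, Measure.pi (i ↦ P.map Xᵢ), and for each i ∈ ι, fᵢ : Ωᵢ → [0,∞] is measurable and is a density of P.map Xᵢ with respect to μᵢ. Then the function ω ↦ f_P(ω) · ∏_{i∈ι} fᵢ(ω i) is a density of P.map X with respect to Measure.pi μ: for every measurable A ⊆ Π i, Ωᵢ, ∫⁻_A f_P(ω) · ∏_{i∈ι} fᵢ(ω i) d(Measure.pi μ) = P(X⁻¹(A)). (Paper's Theorem 4.7: chain rule relating the density with respect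 to the product of marginal laws and the density with respect to a product reference measure.) -/
/-!
Write `νᵢ` for the law of `Xᵢ`. The marginal densities say `νᵢ = μᵢ.withDensity fᵢ`, and a
product of measures with densities is the product measure with the product density, so
`Measure.pi ν = (Measure.pi μ).withDensity (x ↦ ∏ᵢ fᵢ(xᵢ))`. Integrating `f_P` against this
measure is integrating `f_P · ∏ᵢ fᵢ(xᵢ)` against `Measure.pi μ`.
-/

open MeasureTheory Function
open scoped ENNReal

theorem Set.indicator_univ_pi_prod {ι : Type*} [Fintype ι] {α : ι → Type*} {f : ∀ i, α i → ℝ≥0∞}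
    (s : ∀ i, Set (α i)) (x : ∀ i, α i) :
    (Set.univ.pi s).indicator (fun x => ∏ i, f i (x i)) x = ∏ i, (s i).indicator (f i) (x i) := by
  by_cases hx : x ∈ Set.univ.pi s
  · rw [Set.indicator_of_mem hx]
    exact Finset.prod_congr rfl fun i _ => (Set.indicator_of_mem (hx i (Set.mem_univ i)) _).symm
  · obtain ⟨i, -, hxi⟩ := not_forall₂.mp hx
    rw [Set.indicator_of_notMem hx,
      Finset.prod_eq_zero (Finset.mem_univ i) (Set.indicator_of_notMem hxi _)]

namespace MeasureTheory

variable {ι : Type*} [Fintype ι] {α : ι → Type*} [∀ i, MeasurableSpace (α i)]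
  (μ : ∀ i, Measure (α i)) [∀ i, SigmaFinite (μ i)]

theorem lmarginal_prod_eq [DecidableEq ι] {f : ∀ i, α i → ℝ≥0∞} (hf : ∀ i, Measurable (f i))
    (s : Finset ι) (x : ∀ i, α i) :
    (∫⋯∫⁻_s, (fun x => ∏ i, f i (x i)) ∂μ) x
      = (∏ i ∈ s, ∫⁻ y, f i y ∂μ i) * ∏ i ∈ sᶜ, f i (x i) := by
  have hmeas : Measurable (fun x : ∀ i, α i => ∏ i, f i (x i)) :=
    Finset.measurable_prod _ fun i _ => (hf i).comp (measurable_pi_apply i)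
  induction s using Finset.induction_on generalizing x with
  | empty => simp
  | @insert i s hi ih =>
    have hcompl : sᶜ = insert i (insert i s)ᶜ := by
      ext j; by_cases j = i <;> simp_all
    have hupdate : ∀ y : α i, ∏ j ∈ (insert i s)ᶜ, f j (update x i y j)
        = ∏ j ∈ (insert i s)ᶜ, f j (x j) :=
      fun y => Finset.prod_congr rfl fun j hj => by
        rw [update_of_ne (by rintro rfl; simp at hj)]
    simp_rw [lmarginal_insert _ hmeas hi, ih, hcompl,
      Finset.prod_insert (show i ∉ (insert i s)ᶜ by simp), update_self, hupdate]
    rw [Finset.prod_insert hi]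
    simp_rw [mul_left_comm _ (f i _)]
    rw [lintegral_mul_const _ (hf i)]
    ring

theorem lintegral_fintype_prod_eq_prod {f : ∀ i, α i → ℝ≥0∞} (hf : ∀ i, Measurable (f i)) :
    ∫⁻ x, ∏ i, f i (x i) ∂Measure.pi μ = ∏ i, ∫⁻ y, f i y ∂μ i := by
  classical
  rcases isEmpty_or_nonempty (∀ i, α i) with hempty | hne
  · obtain ⟨i, hi⟩ := isEmpty_pi.mp hempty
    rw [Finset.prod_eq_zero (Finset.mem_univ i) (by simp)]
    simp
  · obtain ⟨x⟩ := hne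
    simp [lintegral_eq_lmarginal_univ x, lmarginal_prod_eq μ hf]

theorem Measure.pi_withDensity {f : ∀ i, α i → ℝ≥0∞} (hf : ∀ i, Measurable (f i))
    [∀ i, SigmaFinite ((μ i).withDensity (f i))] :
    Measure.pi (fun i => (μ i).withDensity (f i))
      = (Measure.pi μ).withDensity (fun x => ∏ i, f i (x i)) := by
  refine Measure.pi_eq fun s hs => ?_
  rw [withDensity_apply _ (MeasurableSet.univ_pi hs), ← lintegral_indicator (.univ_pi hs)]
  simp_rw [Set.indicator_univ_pi_prod]
  rw [lintegral_fintype_prod_eq_prod μ fun i => (hf i).indicator (hs i)]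
  simp_rw [lintegral_indicator (hs _), withDensity_apply _ (hs _)]

end MeasureTheory

/-- Paper's Theorem 4.7: if `f_P` is a density of the joint law of `X = (Xᵢ)ᵢ` with
respect to the product of the marginal laws, and each `fᵢ` is a density of the law of
`Xᵢ` with respect to `μᵢ`, then `ω ↦ f_P(ω) · ∏ᵢ fᵢ(ωᵢ)` is a density of the joint law
with respect to the product reference measure `Measure.pi μ`. -/
theorem joint_density_wrt_product_reference_measure
    {Ω : Type*} [MeasurableSpace Ω] (P : Measure Ω) [IsProbabilityMeasure P]
    {ι : Type*} [Fintype ι] {α : ι → Type*} [∀ i, MeasurableSpace (α i)]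
    (μ : ∀ i, Measure (α i)) [∀ i, SigmaFinite (μ i)]
    (X : ∀ i, Ω → α i) (hX : ∀ i, Measurable (X i))
    (fP : (∀ i, α i) → ℝ≥0∞) (hfP : Measurable fP)
    (hfPdens : ∀ A : Set (∀ i, α i), MeasurableSet A →
      ∫⁻ ω in A, fP ω ∂(Measure.pi (fun i => P.map (X i))) = P ((fun ω i => X i ω) ⁻¹' A))
    (fmar : ∀ i, α i → ℝ≥0∞) (hfmar : ∀ i, Measurable (fmar i))
    (hfmardens : ∀ i, ∀ A : Set (α i), MeasurableSet A →
      ∫⁻ x in A, fmar i x ∂(μ i) = P (X i ⁻¹' A)) :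
    ∀ A : Set (∀ i, α i), MeasurableSet A →
      ∫⁻ ω in A, fP ω * ∏ i, fmar i (ω i) ∂(Measure.pi μ) =
        P ((fun ω i => X i ω) ⁻¹' A) := by
  intro A hA
  have hlaw : ∀ i, P.map (X i) = (μ i).withDensity (fmar i) := fun i =>
    Measure.ext fun s hs => by
      rw [Measure.map_apply (hX i) hs, withDensity_apply _ hs, hfmardens i s hs]
  have : ∀ i, SigmaFinite ((μ i).withDensity (fmar i)) := fun i => hlaw i ▸ inferInstance
  have hprod_meas : Measurable fun x : ∀ i, α i => ∏ i, fmar i (x i) :=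
    Finset.measurable_prod _ fun i _ => (hfmar i).comp (measurable_pi_apply i)
  calc ∫⁻ ω in A, fP ω * ∏ i, fmar i (ω i) ∂(Measure.pi μ)
      = ∫⁻ ω in A, fP ω ∂((Measure.pi μ).withDensity fun x => ∏ i, fmar i (x i)) := by
        rw [setLIntegral_withDensity_eq_setLIntegral_mul _ hprod_meas hfP hA]
        simp_rw [Pi.mul_apply, mul_comm]
    _ = ∫⁻ ω in A, fP ω ∂(Measure.pi fun i => P.map (X i)) := by
        simp_rw [hlaw, Measure.pi_withDensity μ hfmar]
    _ = P ((fun ω i => X i ω) ⁻¹' A) := hfPdens A hA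
end

section
/- Let (Ω,𝓕,P) be a probability space, Xᵢ : Ω → Ωᵢ (i = 1,2,3,4) measurable maps into measurable spaces, and let Y : Ω₂ → ℝ be 𝓕₂-measurable and integrable with respect to P.map X₂. Fix measurable sets A₃ ⊆ Ω₃ and A₄ ⊆ Ω₄ with P(X₃⁻¹(A₃)) > 0. Then there exists an 𝓕₁-measurable function φ : Ω₁ → ℝ such that for every measurable A₁ ⊆ Ω₁, ∫_{A₁} φ d(((P.restrict (X₃⁻¹(A₃))).map X₁)) = ∫_{Ω₂} Y d(((P.restrict (X₁⁻¹(A₁) ∩ X₃⁻¹(A₃) ∩ X₄⁻¹(A₄))).map X₂)); moreover any two such functions agree ((P.restrict (X₃⁻¹(A₃))).map X₁)-almost everywhere. (Paper's Theorem 5.3: existence and uniqueness of the conditional expectation E_{[X₂, X₄∈A₄]}(Y | X₁, X₃∈A₃).) -/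
open MeasureTheory

section

variable {α E : Type*} [MeasurableSpace α] [NormedAddCommGroup E] [NormedSpace ℝ E]
  [CompleteSpace E] {μ : Measure α}

/-- Exhausting `α` by the sets where `‖f‖` and `‖g‖` are at most `n` reduces this to the
integrable case. -/
theorem ae_eq_of_forall_setIntegral_eq_of_stronglyMeasurable [SigmaFinite μ] {f g : α → E}
    (hf : StronglyMeasurable f) (hg : StronglyMeasurable g)
    (hfg : ∀ s, MeasurableSet s → ∫ x in s, f x ∂μ = ∫ x in s, g x ∂μ) : f =ᵐ[μ] g := by
  set B : ℕ → Set α := fun n => {x | ‖f x‖ ≤ n ∧ ‖g x‖ ≤ n}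
  have hB : ∀ n, MeasurableSet (B n) := fun n =>
    (measurableSet_le hf.norm.measurable measurable_const).inter
      (measurableSet_le hg.norm.measurable measurable_const)
  have hB_cover : (⋃ n, B n) = Set.univ := by
    refine Set.eq_univ_of_forall fun x => Set.mem_iUnion.2 ?_
    obtain ⟨n, hn⟩ := exists_nat_ge (max ‖f x‖ ‖g x‖)
    exact ⟨n, (le_max_left _ _).trans hn, (le_max_right _ _).trans hn⟩
  have bounded_integrableOn : ∀ (h : α → E) (n : ℕ), StronglyMeasurable h →
      (∀ x ∈ B n, ‖h x‖ ≤ n) → ∀ s, MeasurableSet s → μ.restrict (B n) s < ⊤ →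
        IntegrableOn h s (μ.restrict (B n)) := fun h n hh hbd s hs hfin =>
    Measure.integrableOn_of_bounded hfin.ne hh.aestronglyMeasurable
      (ae_restrict_of_ae (ae_restrict_of_forall_mem (hB n) hbd))
  rw [← Measure.restrict_univ (μ := μ), ← hB_cover, Filter.EventuallyEq, ae_restrict_iUnion_iff]
  intro n
  refine ae_eq_of_forall_setIntegral_eq_of_sigmaFinite
    (bounded_integrableOn f n hf fun x hx => hx.1)
    (bounded_integrableOn g n hg fun x hx => hx.2) fun s hs _ => ?_
  rw [Measure.restrict_restrict hs]
  exact hfg _ (hs.inter (hB n))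

end

section

variable {Ω Ω₁ : Type*} [MeasurableSpace Ω] [MeasurableSpace Ω₁] {μ : Measure Ω} {X : Ω → Ω₁}

/-- The Radon–Nikodym derivative, with respect to `μ.map X`, of the push-forward of `g • μ`. -/
theorem exists_measurable_setIntegral_map_eq [IsFiniteMeasure μ] (hX : Measurable X)
    {g : Ω → ℝ} (hg : Integrable g μ) :
    ∃ φ : Ω₁ → ℝ, Measurable φ ∧
      ∀ A, MeasurableSet A → ∫ x in A, φ x ∂(μ.map X) = ∫ ω in X ⁻¹' A, g ω ∂μ := by
  set ν : SignedMeasure Ω₁ := (μ.withDensityᵥ g).map X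
  have hν : ∀ A, MeasurableSet A → ν A = ∫ ω in X ⁻¹' A, g ω ∂μ := fun A hA => by
    rw [VectorMeasure.map_apply _ hX hA, withDensityᵥ_apply hg (hX hA)]
  have hν_ac : ν ≪ᵥ (μ.map X).toENNRealVectorMeasure := by
    refine VectorMeasure.AbsolutelyContinuous.mk fun A hA hA0 => ?_
    rw [Measure.toENNRealVectorMeasure_apply_measurable hA, Measure.map_apply hX hA] at hA0
    rw [hν A hA, Measure.restrict_eq_zero.2 hA0, integral_zero_measure]
  refine ⟨ν.rnDeriv (μ.map X), SignedMeasure.measurable_rnDeriv _ _, fun A hA => ?_⟩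
  rw [← hν A hA, ← withDensityᵥ_apply (SignedMeasure.integrable_rnDeriv _ _) hA,
    SignedMeasure.withDensityᵥ_rnDeriv_eq _ _ hν_ac]

end

theorem integral_map_restrict_inter_eq_setIntegral_indicator {Ω Ω₂ : Type*} [MeasurableSpace Ω]
    [MeasurableSpace Ω₂] (P : Measure Ω) {X : Ω → Ω₂} (hX : Measurable X) {Y : Ω₂ → ℝ}
    (hY : Measurable Y) {s t u : Set Ω} (hs : MeasurableSet s) (hu : MeasurableSet u) :
    ∫ y, Y y ∂((P.restrict (s ∩ t ∩ u)).map X) =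
      ∫ ω in s, u.indicator (Y ∘ X) ω ∂(P.restrict t) := by
  rw [integral_map hX.aemeasurable hY.aestronglyMeasurable, integral_indicator hu,
    Measure.restrict_restrict hu, Measure.restrict_restrict (hu.inter hs), Set.inter_comm u,
    Set.inter_right_comm]
  rfl

theorem conditional_E_integral_exists_unique_general
    {Ω Ω₁ Ω₂ Ω₃ Ω₄ : Type*} [MeasurableSpace Ω] [MeasurableSpace Ω₁] [MeasurableSpace Ω₂]
    [MeasurableSpace Ω₄]
    (P : Measure Ω) [IsProbabilityMeasure P]
    {X₁ : Ω → Ω₁} {X₂ : Ω → Ω₂} {X₃ : Ω → Ω₃} {X₄ : Ω → Ω₄}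
    (hX₁ : Measurable X₁) (hX₂ : Measurable X₂)
    (hX₄ : Measurable X₄)
    (Y : Ω₂ → ℝ) (hY : Measurable Y) (hYint : Integrable Y (P.map X₂))
    {A₃ : Set Ω₃} {A₄ : Set Ω₄} (hA₄ : MeasurableSet A₄) :
    (∃ φ : Ω₁ → ℝ, Measurable φ ∧
      ∀ A₁ : Set Ω₁, MeasurableSet A₁ →
        ∫ x in A₁, φ x ∂((P.restrict (X₃ ⁻¹' A₃)).map X₁) =
          ∫ y, Y y ∂((P.restrict (X₁ ⁻¹' A₁ ∩ X₃ ⁻¹' A₃ ∩ X₄ ⁻¹' A₄)).map X₂)) ∧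
    (∀ φ ψ : Ω₁ → ℝ, Measurable φ → Measurable ψ →
      (∀ A₁ : Set Ω₁, MeasurableSet A₁ →
        ∫ x in A₁, φ x ∂((P.restrict (X₃ ⁻¹' A₃)).map X₁) =
          ∫ y, Y y ∂((P.restrict (X₁ ⁻¹' A₁ ∩ X₃ ⁻¹' A₃ ∩ X₄ ⁻¹' A₄)).map X₂)) →
      (∀ A₁ : Set Ω₁, MeasurableSet A₁ →
        ∫ x in A₁, ψ x ∂((P.restrict (X₃ ⁻¹' A₃)).map X₁) =
          ∫ y, Y y ∂((P.restrict (X₁ ⁻¹' A₁ ∩ X₃ ⁻¹' A₃ ∩ X₄ ⁻¹' A₄)).map X₂)) →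
      φ =ᵐ[(P.restrict (X₃ ⁻¹' A₃)).map X₁] ψ) := by
  have hg : Integrable ((X₄ ⁻¹' A₄).indicator (Y ∘ X₂)) (P.restrict (X₃ ⁻¹' A₃)) :=
    ((integrable_map_measure hY.aestronglyMeasurable hX₂.aemeasurable).1 hYint).restrict.indicator
      (hX₄ hA₄)
  have hrhs := fun A₁ (hA₁ : MeasurableSet A₁) =>
    integral_map_restrict_inter_eq_setIntegral_indicator P hX₂ hY (t := X₃ ⁻¹' A₃) (hX₁ hA₁)
      (hX₄ hA₄)
  obtain ⟨φ, hφ, hφ_eq⟩ := exists_measurable_setIntegral_map_eq hX₁ hg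
  refine ⟨⟨φ, hφ, fun A₁ hA₁ => (hφ_eq A₁ hA₁).trans (hrhs A₁ hA₁).symm⟩,
    fun φ ψ hφ hψ hφ_eq hψ_eq => ?_⟩
  exact ae_eq_of_forall_setIntegral_eq_of_stronglyMeasurable hφ.stronglyMeasurable
    hψ.stronglyMeasurable fun A hA => (hφ_eq A hA).trans (hψ_eq A hA).symm

/-- Paper's Theorem 5.3: existence and uniqueness (a.e. with respect to the
co-occurrence measure `P[X₁, X₃ ∈ A₃]`) of the conditional E-integral
`E_{[X₂, X₄ ∈ A₄]}(Y | X₁, X₃ ∈ A₃)`: a measurable `φ : Ω₁ → ℝ` with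
`∫_{A₁} φ d(P[X₁, X₃∈A₃]) = ∫ Y d(P[X₂, X₁∈A₁ ∧ X₃∈A₃ ∧ X₄∈A₄])` for all
measurable `A₁`. -/
theorem conditional_E_integral_exists_unique
    {Ω Ω₁ Ω₂ Ω₃ Ω₄ : Type*} [MeasurableSpace Ω] [MeasurableSpace Ω₁] [MeasurableSpace Ω₂]
    [MeasurableSpace Ω₃] [MeasurableSpace Ω₄]
    (P : Measure Ω) [IsProbabilityMeasure P]
    {X₁ : Ω → Ω₁} {X₂ : Ω → Ω₂} {X₃ : Ω → Ω₃} {X₄ : Ω → Ω₄}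
    (hX₁ : Measurable X₁) (hX₂ : Measurable X₂) (hX₃ : Measurable X₃)
    (hX₄ : Measurable X₄)
    (Y : Ω₂ → ℝ) (hY : Measurable Y) (hYint : Integrable Y (P.map X₂))
    {A₃ : Set Ω₃} {A₄ : Set Ω₄} (hA₃ : MeasurableSet A₃) (hA₄ : MeasurableSet A₄)
    (hpos : 0 < P (X₃ ⁻¹' A₃)) :
    (∃ φ : Ω₁ → ℝ, Measurable φ ∧
      ∀ A₁ : Set Ω₁, MeasurableSet A₁ →
        ∫ x in A₁, φ x ∂((P.restrict (X₃ ⁻¹' A₃)).map X₁) =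
          ∫ y, Y y ∂((P.restrict (X₁ ⁻¹' A₁ ∩ X₃ ⁻¹' A₃ ∩ X₄ ⁻¹' A₄)).map X₂)) ∧
    (∀ φ ψ : Ω₁ → ℝ, Measurable φ → Measurable ψ →
      (∀ A₁ : Set Ω₁, MeasurableSet A₁ →
        ∫ x in A₁, φ x ∂((P.restrict (X₃ ⁻¹' A₃)).map X₁) =
          ∫ y, Y y ∂((P.restrict (X₁ ⁻¹' A₁ ∩ X₃ ⁻¹' A₃ ∩ X₄ ⁻¹' A₄)).map X₂)) →
      (∀ A₁ : Set Ω₁, MeasurableSet A₁ →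
        ∫ x in A₁, ψ x ∂((P.restrict (X₃ ⁻¹' A₃)).map X₁) =
          ∫ y, Y y ∂((P.restrict (X₁ ⁻¹' A₁ ∩ X₃ ⁻¹' A₃ ∩ X₄ ⁻¹' A₄)).map X₂)) →
      φ =ᵐ[(P.restrict (X₃ ⁻¹' A₃)).map X₁] ψ) :=
  conditional_E_integral_exists_unique_general P hX₁ hX₂ hX₄ Y hY hYint hA₄
end

section
/- Let (Ω,𝓕,P) be a probability space, Xᵢ : Ω → Ωᵢ (i = 1,2,3,4) measurable maps into measurable spaces, and let Y : Ω₂ → ℝ be 𝓕₂-measurable and integrable with respect to P.map X₂. Fix measurable sets A₃ ⊆ Ω₃, A₄ ⊆ Ω₄ with P(X₃⁻¹(A₃)) > 0, set ν := (P.restrict (X₃⁻¹(A₃))).map X₁, and suppose K is a finite kernel from Ω₁ to Ω₂ with ∫_{A₁} K(ω₁)(A₂) dν = P(X₁⁻¹(A₁) ∩ X₂⁻¹(A₂) ∩ X₃⁻¹(A₃) ∩ X₄⁻¹(A₄)) for all measurable A₁, A₂ (a kernel version of P[X₂, X₄∈A₄ | X₁, X₃∈A₃]). Then Y is K(ω₁)-integrable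 for ν-almost every ω₁, and the function ω₁ ↦ ∫_{Ω₂} Y dK(ω₁) is a version of E_{[X₂, X₄∈A₄]}(Y | X₁, X₃∈A₃): for every measurable A₁ ⊆ Ω₁, ∫_{A₁} (∫_{Ω₂} Y dK(ω₁)) dν(ω₁) = ∫_{Ω₂} Y d(((P.restrict (X₁⁻¹(A₁) ∩ X₃⁻¹(A₃) ∩ X₄⁻¹(A₄))).map X₂)). (Paper's Theorem 5.4: kernel representation of the conditional E-integral.) -/
open MeasureTheory ProbabilityTheory

/-- Paper's Theorem 5.4: if `K` is a kernel version of `P[X₂, X₄∈A₄ | X₁, X₃∈A₃]`, then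
`Y` is `K(ω₁)`-integrable for `ν`-a.e. `ω₁` (where `ν = P[X₁, X₃∈A₃]`) and
`ω₁ ↦ ∫ Y d(K ω₁)` is a version of the conditional E-integral
`E_{[X₂, X₄∈A₄]}(Y | X₁, X₃∈A₃)`. -/
theorem conditional_E_integral_kernel_representation
    {Ω Ω₁ Ω₂ Ω₃ Ω₄ : Type*} [MeasurableSpace Ω] [MeasurableSpace Ω₁] [MeasurableSpace Ω₂]
    [MeasurableSpace Ω₃] [MeasurableSpace Ω₄]
    (P : Measure Ω) [IsProbabilityMeasure P]
    {X₁ : Ω → Ω₁} {X₂ : Ω → Ω₂} {X₃ : Ω → Ω₃} {X₄ : Ω → Ω₄}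
    (hX₁ : Measurable X₁) (hX₂ : Measurable X₂) (hX₃ : Measurable X₃)
    (hX₄ : Measurable X₄)
    (Y : Ω₂ → ℝ) (hY : Measurable Y) (hYint : Integrable Y (P.map X₂))
    {A₃ : Set Ω₃} {A₄ : Set Ω₄} (hA₃ : MeasurableSet A₃) (hA₄ : MeasurableSet A₄)
    (hpos : 0 < P (X₃ ⁻¹' A₃))
    (K : Kernel Ω₁ Ω₂) [IsFiniteKernel K]
    (hK : ∀ (A₁ : Set Ω₁) (A₂ : Set Ω₂), MeasurableSet A₁ → MeasurableSet A₂ →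
      ∫⁻ ω₁ in A₁, K ω₁ A₂ ∂((P.restrict (X₃ ⁻¹' A₃)).map X₁) =
        P (X₁ ⁻¹' A₁ ∩ X₂ ⁻¹' A₂ ∩ X₃ ⁻¹' A₃ ∩ X₄ ⁻¹' A₄)) :
    (∀ᵐ ω₁ ∂((P.restrict (X₃ ⁻¹' A₃)).map X₁), Integrable Y (K ω₁)) ∧
    (∀ A₁ : Set Ω₁, MeasurableSet A₁ →
      ∫ ω₁ in A₁, (∫ y, Y y ∂(K ω₁)) ∂((P.restrict (X₃ ⁻¹' A₃)).map X₁) =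
        ∫ y, Y y ∂((P.restrict (X₁ ⁻¹' A₁ ∩ X₃ ⁻¹' A₃ ∩ X₄ ⁻¹' A₄)).map X₂)) := by
  set ν := (P.restrict (X₃ ⁻¹' A₃)).map X₁ with hν
  haveI : IsFiniteMeasure ν := by rw [hν]; exact Measure.isFiniteMeasure_map _ _
  have hsnd : ∀ (A₁ : Set Ω₁), MeasurableSet A₁ →
      ((ν ⊗ₘ K).restrict (A₁ ×ˢ Set.univ)).map Prod.snd
        = (P.restrict (X₁ ⁻¹' A₁ ∩ X₃ ⁻¹' A₃ ∩ X₄ ⁻¹' A₄)).map X₂ := by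
    intro A₁ hA₁
    ext A₂ hA₂
    rw [Measure.map_apply measurable_snd hA₂,
      Measure.restrict_apply (measurable_snd hA₂),
      Measure.map_apply hX₂ hA₂,
      Measure.restrict_apply (hX₂ hA₂)]
    have h1 : Prod.snd ⁻¹' A₂ ∩ A₁ ×ˢ Set.univ = A₁ ×ˢ A₂ := by
      ext p; simp [and_comm]
    rw [h1, Measure.compProd_apply_prod hA₁ hA₂, hK A₁ A₂ hA₁ hA₂]
    congr 1
    ext ω
    simp only [Set.mem_inter_iff, Set.mem_preimage]
    tauto
  have hmap : (ν ⊗ₘ K).map Prod.snd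
      = (P.restrict (X₃ ⁻¹' A₃ ∩ X₄ ⁻¹' A₄)).map X₂ := by
    have h := hsnd Set.univ MeasurableSet.univ
    simpa [Set.univ_prod_univ, Set.inter_assoc] using h
  have hYsnd : Integrable (fun p : Ω₁ × Ω₂ => Y p.2) (ν ⊗ₘ K) := by
    have h1 : Integrable Y ((ν ⊗ₘ K).map Prod.snd) := by
      rw [hmap]
      refine hYint.mono_measure (Measure.le_iff.2 fun s hs => ?_)
      rw [Measure.map_apply hX₂ hs, Measure.map_apply hX₂ hs,
        Measure.restrict_apply (hX₂ hs)]
      exact measure_mono Set.inter_subset_left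
    exact (integrable_map_measure hY.aestronglyMeasurable
      measurable_snd.aemeasurable).mp h1
  have hint := (Measure.integrable_compProd_iff
    ((hY.comp measurable_snd).aestronglyMeasurable)).1 hYsnd
  refine ⟨by simpa using hint.1, fun A₁ hA₁ => ?_⟩
  rw [← hsnd A₁ hA₁,
    integral_map measurable_snd.aemeasurable hY.aestronglyMeasurable]
  rw [Measure.setIntegral_compProd hA₁ MeasurableSet.univ hYsnd.integrableOn]
  simp [Measure.restrict_univ]
end

section
/- Let (Ω,𝓕,P) be a probability space, Xᵢ : Ω → Ωᵢ (i = 1,2,3) measurable maps into measurable spaces, and φ : ℝ → ℝ a convex function (φ(t·x + (1−t)·y) ≤ t·φ(x) + (1−t)·φ(y) for all x, y ∈ ℝ and t ∈ [0,1]). Fix a measurable set A₃ ⊆ Ω₃ with P(X₃⁻¹(A₃)) > 0, set ν := (P.restrict (X₃⁻¹(A₃))).map X₁, and suppose K is a finite kernel from Ω₁ to Ω₂ with ∫_{A₁} K(ω₁)(A₂) dν = P(X₁⁻¹(A₁) ∩ X₂⁻¹(A₂) ∩ X₃⁻¹(A₃)) for all measurable A₁, A₂ (a kernel version of P[X₂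 | X₁, X₃∈A₃]). Let Y : Ω₂ → ℝ be 𝓕₂-measurable with both Y and φ ∘ Y integrable with respect to P.map X₂. Then for ν-almost every ω₁ ∈ Ω₁, K(ω₁) is a probability measure, Y and φ ∘ Y are K(ω₁)-integrable, and φ(∫_{Ω₂} Y dK(ω₁)) ≤ ∫_{Ω₂} (φ ∘ Y) dK(ω₁). (Paper's Theorem 6.14: Jensen's inequality for the conditional E-integral given co-occurrence of X₁ and X₃∈A₃.) -/
open MeasureTheory ProbabilityTheory

/-!
Taking `A₂ = Ω₂` in the defining identity of `K` shows that `∫_{A₁} K(ω₁)(Ω₂) dν = ν(A₁)` for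
every `A₁`, so `K(ω₁)` has mass one for `ν`-a.e. `ω₁`; taking `A₁ = Ω₁` shows that the
composition `K ∘ ν` is dominated by the law of `X₂`. Hence `Y` and `φ ∘ Y`, being integrable for
the law of `X₂`, are integrable for `K ∘ ν`, so for `K(ω₁)` with `ν`-a.e. `ω₁`, and Jensen's
inequality applies to each of these probability measures `K(ω₁)`.
-/

lemma convexOn_univ_of_forall_le {φ : ℝ → ℝ}
    (hφ : ∀ x y t : ℝ, 0 ≤ t → t ≤ 1 → φ (t * x + (1 - t) * y) ≤ t * φ x + (1 - t) * φ y) :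
    ConvexOn ℝ Set.univ φ := by
  refine ⟨convex_univ, fun x _ y _ a b ha hb hab => ?_⟩
  obtain rfl : b = 1 - a := by linarith
  exact hφ x y a ha (by linarith)

lemma ConvexOn.map_integral_le_of_univ {α E : Type*} [MeasurableSpace α] {μ : Measure α}
    [IsProbabilityMeasure μ] [NormedAddCommGroup E] [NormedSpace ℝ E] [FiniteDimensional ℝ E]
    {φ : E → ℝ} {f : α → E} (hφ : ConvexOn ℝ Set.univ φ) (hf : Integrable f μ)
    (hφf : Integrable (φ ∘ f) μ) :
    φ (∫ x, f x ∂μ) ≤ ∫ x, φ (f x) ∂μ :=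
  hφ.map_integral_le (hφ.continuousOn isOpen_univ) isClosed_univ
    (.of_forall fun _ => Set.mem_univ _) hf hφf

lemma Kernel.ae_isProbabilityMeasure_of_setLIntegral_eq {α β : Type*} [MeasurableSpace α]
    [MeasurableSpace β] {κ : Kernel α β} {ν : Measure α} [SigmaFinite ν]
    (h : ∀ s, MeasurableSet s → ∫⁻ a in s, κ a Set.univ ∂ν = ν s) :
    ∀ᵐ a ∂ν, IsProbabilityMeasure (κ a) := by
  have hmass : (fun a => κ a Set.univ) =ᵐ[ν] fun _ => 1 :=
    ae_eq_of_forall_setLIntegral_eq_of_sigmaFinite (κ.measurable_coe MeasurableSet.univ)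
      measurable_const fun s hs _ => by rw [h s hs, setLIntegral_one]
  filter_upwards [hmass] with a ha using ⟨ha⟩

section CoOccurrence

variable {Ω Ω₁ Ω₂ : Type*} [MeasurableSpace Ω] [MeasurableSpace Ω₁] [MeasurableSpace Ω₂]
  {P : Measure Ω} {X₁ : Ω → Ω₁} {X₂ : Ω → Ω₂} {E : Set Ω} {K : Kernel Ω₁ Ω₂}

def IsCoOccurrenceCondKernel (P : Measure Ω) (X₁ : Ω → Ω₁) (X₂ : Ω → Ω₂) (E : Set Ω)
    (K : Kernel Ω₁ Ω₂) : Prop :=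
  ∀ A₁ A₂, MeasurableSet A₁ → MeasurableSet A₂ →
    ∫⁻ ω₁ in A₁, K ω₁ A₂ ∂((P.restrict E).map X₁) = P (X₁ ⁻¹' A₁ ∩ X₂ ⁻¹' A₂ ∩ E)

lemma coOccurrence_apply (hX₁ : Measurable X₁) {A₁ : Set Ω₁} (hA₁ : MeasurableSet A₁) :
    (P.restrict E).map X₁ A₁ = P (X₁ ⁻¹' A₁ ∩ E) := by
  rw [Measure.map_apply hX₁ hA₁, Measure.restrict_apply (hX₁ hA₁)]

lemma IsCoOccurrenceCondKernel.ae_isProbabilityMeasure [IsFiniteMeasure P]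
    (hK : IsCoOccurrenceCondKernel P X₁ X₂ E K) (hX₁ : Measurable X₁) :
    ∀ᵐ ω₁ ∂((P.restrict E).map X₁), IsProbabilityMeasure (K ω₁) :=
  Kernel.ae_isProbabilityMeasure_of_setLIntegral_eq fun A₁ hA₁ => by
    rw [hK A₁ Set.univ hA₁ .univ, coOccurrence_apply hX₁ hA₁, Set.preimage_univ, Set.inter_univ]

lemma IsCoOccurrenceCondKernel.comp_le_map (hK : IsCoOccurrenceCondKernel P X₁ X₂ E K)
    (hX₂ : Measurable X₂) :
    K ∘ₘ (P.restrict E).map X₁ ≤ P.map X₂ := by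
  refine Measure.le_iff.mpr fun A₂ hA₂ => ?_
  rw [Measure.bind_apply hA₂ K.aemeasurable, ← setLIntegral_univ, hK Set.univ A₂ .univ hA₂,
    Measure.map_apply hX₂ hA₂, Set.preimage_univ, Set.univ_inter]
  exact measure_mono Set.inter_subset_left

end CoOccurrence

theorem jensen_inequality_conditional_E_integral_general
    {Ω Ω₁ Ω₂ Ω₃ : Type*} [MeasurableSpace Ω] [MeasurableSpace Ω₁] [MeasurableSpace Ω₂]
    [MeasurableSpace Ω₃]
    (P : Measure Ω) [IsProbabilityMeasure P]
    {X₁ : Ω → Ω₁} {X₂ : Ω → Ω₂} {X₃ : Ω → Ω₃}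
    (hX₁ : Measurable X₁) (hX₂ : Measurable X₂)
    (φ : ℝ → ℝ)
    (hφ : ∀ (x y t : ℝ), 0 ≤ t → t ≤ 1 →
      φ (t * x + (1 - t) * y) ≤ t * φ x + (1 - t) * φ y)
    {A₃ : Set Ω₃}
    (K : Kernel Ω₁ Ω₂)
    (hK : ∀ (A₁ : Set Ω₁) (A₂ : Set Ω₂), MeasurableSet A₁ → MeasurableSet A₂ →
      ∫⁻ ω₁ in A₁, K ω₁ A₂ ∂((P.restrict (X₃ ⁻¹' A₃)).map X₁) =
        P (X₁ ⁻¹' A₁ ∩ X₂ ⁻¹' A₂ ∩ X₃ ⁻¹' A₃))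
    (Y : Ω₂ → ℝ)
    (hYint : Integrable Y (P.map X₂)) (hφYint : Integrable (φ ∘ Y) (P.map X₂)) :
    ∀ᵐ ω₁ ∂((P.restrict (X₃ ⁻¹' A₃)).map X₁),
      IsProbabilityMeasure (K ω₁) ∧ Integrable Y (K ω₁) ∧ Integrable (φ ∘ Y) (K ω₁) ∧
        φ (∫ y, Y y ∂(K ω₁)) ≤ ∫ y, φ (Y y) ∂(K ω₁) := by
  have hK' : IsCoOccurrenceCondKernel P X₁ X₂ (X₃ ⁻¹' A₃) K := hK
  have hle := hK'.comp_le_map hX₂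
  filter_upwards [hK'.ae_isProbabilityMeasure hX₁,
    Measure.ae_integrable_of_integrable_comp (hYint.mono_measure hle),
    Measure.ae_integrable_of_integrable_comp (hφYint.mono_measure hle)] with ω₁ hprob hY hφY
  exact ⟨hprob, hY, hφY, (convexOn_univ_of_forall_le hφ).map_integral_le_of_univ hY hφY⟩

/-- Paper's Theorem 6.14 (Jensen's inequality for the conditional E-integral):
if `φ : ℝ → ℝ` is convex, `K` is a kernel version of `P[X₂ | X₁, X₃ ∈ A₃]`, and `Y`
and `φ ∘ Y` are integrable with respect to the law of `X₂`, then for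
`ν = P[X₁, X₃∈A₃]`-a.e. `ω₁` the measure `K ω₁` is a probability measure, `Y` and
`φ ∘ Y` are `K ω₁`-integrable, and `φ(∫ Y d(K ω₁)) ≤ ∫ φ ∘ Y d(K ω₁)`. -/
theorem jensen_inequality_conditional_E_integral
    {Ω Ω₁ Ω₂ Ω₃ : Type*} [MeasurableSpace Ω] [MeasurableSpace Ω₁] [MeasurableSpace Ω₂]
    [MeasurableSpace Ω₃]
    (P : Measure Ω) [IsProbabilityMeasure P]
    {X₁ : Ω → Ω₁} {X₂ : Ω → Ω₂} {X₃ : Ω → Ω₃}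
    (hX₁ : Measurable X₁) (hX₂ : Measurable X₂) (hX₃ : Measurable X₃)
    (φ : ℝ → ℝ)
    (hφ : ∀ (x y t : ℝ), 0 ≤ t → t ≤ 1 →
      φ (t * x + (1 - t) * y) ≤ t * φ x + (1 - t) * φ y)
    {A₃ : Set Ω₃} (hA₃ : MeasurableSet A₃) (hpos : 0 < P (X₃ ⁻¹' A₃))
    (K : Kernel Ω₁ Ω₂) [IsFiniteKernel K]
    (hK : ∀ (A₁ : Set Ω₁) (A₂ : Set Ω₂), MeasurableSet A₁ → MeasurableSet A₂ →
      ∫⁻ ω₁ in A₁, K ω₁ A₂ ∂((P.restrict (X₃ ⁻¹' A₃)).map X₁) =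
        P (X₁ ⁻¹' A₁ ∩ X₂ ⁻¹' A₂ ∩ X₃ ⁻¹' A₃))
    (Y : Ω₂ → ℝ) (hY : Measurable Y)
    (hYint : Integrable Y (P.map X₂)) (hφYint : Integrable (φ ∘ Y) (P.map X₂)) :
    ∀ᵐ ω₁ ∂((P.restrict (X₃ ⁻¹' A₃)).map X₁),
      IsProbabilityMeasure (K ω₁) ∧ Integrable Y (K ω₁) ∧ Integrable (φ ∘ Y) (K ω₁) ∧
        φ (∫ y, Y y ∂(K ω₁)) ≤ ∫ y, φ (Y y) ∂(K ω₁) :=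
  jensen_inequality_conditional_E_integral_general P hX₁ hX₂ φ hφ K hK Y hYint hφYint
end
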